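/- arXiv:2303.04045 — 8 statements merged into one kernel-verified Lean document; each statement's English description precedes it below -/
import Mathlib

section
/- Norm equivalence of the relative energy (Lemma 4.1): Let P be three times continuously differentiable on [ρ̲, ρ̄] with 0 < C̲_{P''} ≤ P'' ≤ C̄_{P''} there (0 < ρ̲ < ρ̄), let ṽ > 0 satisfy the subsonic condition ρP''(ρ) ≥ 4ṽ² for all ρ ∈ [ρ̲, ρ̄], and let ℓ > 0. Then there exist constants c₀ > 0 and C₀ > 0 such that for all measurable u₁ = (ρ₁, v₁) and u₂ = (ρ₂, v₂) on (0,ℓ) with ρ̲ ≤ ρ₁(x), ρ₂(x) ≤ ρ̄ and |v₁(x)|, |v₂(x)| ≤ ṽ for almost every x ∈ (0,ℓ): c₀ ∫₀^ℓ ((ρ₁ − ρ₂)² + (v₁ − v₂)²) dx ≤ H(u₁ | u₂) ≤ C₀ ∫₀^ℓ ((ρ₁ − ρ₂)² + (v₁ − v₂)²) dx. -/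
open MeasureTheory Set

lemma taylorP (rl ru : ℝ) (P P' P'' : ℝ → ℝ)
    (hP' : ∀ r ∈ Icc rl ru, HasDerivAt P (P' r) r)
    (hP'' : ∀ r ∈ Icc rl ru, HasDerivAt P' (P'' r) r)
    (a b : ℝ) (ha : a ∈ Icc rl ru) (hb : b ∈ Icc rl ru) (hne : a ≠ b) :
    ∃ ξ ∈ Icc rl ru, (min a b < ξ ∧ ξ < max a b) ∧
      P b - P a - P' a * (b - a) = P'' ξ * (b - a) ^ 2 / 2 := by
  set M : ℝ := (P b - P a - P' a * (b - a)) / (b - a) ^ 2 with hM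
  have hba : (b - a) ^ 2 ≠ 0 := pow_ne_zero _ (sub_ne_zero.mpr (Ne.symm hne))
  have hMe : P b - P a - P' a * (b - a) = M * (b - a) ^ 2 := by
    rw [hM]; field_simp
  set g : ℝ → ℝ := fun x => P b - P x - P' x * (b - x) - M * (b - x) ^ 2 with hg
  have hgderiv : ∀ x ∈ Icc rl ru, HasDerivAt g ((b - x) * (2 * M - P'' x)) x := by
    intro x hx
    have h1 := hP' x hx
    have h2 := hP'' x hx
    have hbx : HasDerivAt (fun y : ℝ => b - y) (-1) x := (hasDerivAt_id x).const_sub b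
    have : HasDerivAt g (0 - P' x - (P'' x * (b - x) + P' x * (-1))
        - M * (((2:ℕ) : ℝ) * (b - x) ^ 1 * (-1))) x := by
      exact (((hasDerivAt_const x (P b)).sub h1).sub (h2.mul hbx)).sub ((hbx.pow 2).const_mul M)
    convert this using 1; push_cast; ring
  have hga : g a = 0 := by simp only [hg]; linarith [hMe]
  have hgb : g b = 0 := by simp only [hg]; ring
  have key : ∀ u v : ℝ, u < v → u ∈ Icc rl ru → v ∈ Icc rl ru →
      g u = 0 → g v = 0 → ∃ ξ, ξ ∈ Icc rl ru ∧ (u < ξ ∧ ξ < v) ∧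
        (b - ξ) * (2 * M - P'' ξ) = 0 := by
    intro u v huv hu hv hgu hgv
    have hss : Icc u v ⊆ Icc rl ru := Icc_subset_Icc hu.1 hv.2
    have hcont : ContinuousOn g (Icc u v) := fun x hx =>
      ((hgderiv x (hss hx)).continuousAt).continuousWithinAt
    obtain ⟨ξ, hξ, hz⟩ := exists_hasDerivAt_eq_zero huv hcont (hgu.trans hgv.symm)
      (fun x hx => hgderiv x (hss (Ioo_subset_Icc_self hx)))
    exact ⟨ξ, hss (Ioo_subset_Icc_self hξ), ⟨hξ.1, hξ.2⟩, hz⟩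
  rcases lt_or_gt_of_ne hne with h | h
  · obtain ⟨ξ, hξm, hξo, hz⟩ := key a b h ha hb hga hgb
    have hPξ : P'' ξ = 2 * M := by
      have : b - ξ ≠ 0 := sub_ne_zero.mpr (ne_of_gt hξo.2)
      rcases mul_eq_zero.mp hz with h0 | h0
      · exact absurd h0 this
      · linarith
    refine ⟨ξ, hξm, ?_, ?_⟩
    · rw [min_eq_left h.le, max_eq_right h.le]; exact hξo
    · rw [hPξ]; linarith [hMe]
  · obtain ⟨ξ, hξm, hξo, hz⟩ := key b a h hb ha hgb hga
    have hPξ : P'' ξ = 2 * M := by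
      have : b - ξ ≠ 0 := sub_ne_zero.mpr (ne_of_lt hξo.1)
      rcases mul_eq_zero.mp hz with h0 | h0
      · exact absurd h0 this
      · linarith
    refine ⟨ξ, hξm, ?_, ?_⟩
    · rw [min_eq_right h.le, max_eq_left h.le]; exact hξo
    · rw [hPξ]; linarith [hMe]

set_option maxHeartbeats 2000000 in
lemma lowerJ (rl ru vt CP2l c0 b a ξ Pξ w2 w : ℝ)
    (hrl : 0 < rl) (hlu : rl < ru) (hvt : 0 < vt) (hCP2l : 0 < CP2l)
    (hbl : rl ≤ b) (hbu : b ≤ ru) (hal : rl ≤ a) (hau : a ≤ ru)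
    (hξl : rl ≤ ξ) (hξu : ξ ≤ ru) (hmax : ξ < max a b)
    (hPl : CP2l ≤ Pξ) (hsubξ : 4*vt^2 ≤ ξ*Pξ)
    (hw2l : -vt ≤ w2) (hw2u : w2 ≤ vt) (hwl : -(2*vt) ≤ w) (hwu : w ≤ 2*vt)
    (hc0 : 0 < c0) (hc0a : c0 ≤ rl/4) (hc0b : c0 ≤ CP2l/4)
    (hc0B : c0 ≤ vt^2*rl^2/(ru*((ru-rl)^2 + 4*vt^2)))
    (hc0c1 : c0 ≤ vt^2/(4*ru)) (hc0c2 : c0 ≤ rl^3/(48*ru^2)) :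
    c0 * ((b-a)^2 + w^2) ≤ b/2*w^2 + w2*(b-a)*w + Pξ*(b-a)^2/2 := by
  set J := b/2*w^2 + w2*(b-a)*w + Pξ*(b-a)^2/2 with hJ
  clear_value J
  have hru0 : 0 < ru := hrl.trans hlu
  have hb0 : 0 < b := lt_of_lt_of_le hrl hbl
  have ha0 : 0 < a := lt_of_lt_of_le hrl hal
  have hξ0 : 0 < ξ := lt_of_lt_of_le hrl hξl
  have hPpos : 0 < Pξ := lt_of_lt_of_le hCP2l hPl
  have hw2sq : w2^2 ≤ vt^2 := sq_le_sq' hw2l hw2u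
  rcases le_or_gt ξ b with hAcase | hBcase
  · -- Case A
    clear hc0B hc0c1 hc0c2 hwl hwu hmax hξu hξl hξ0
    have hbP : 4*w2^2 ≤ b*Pξ := by
      have e0 : 0 ≤ (b - ξ)*Pξ := mul_nonneg (by linarith) hPpos.le
      linarith [e0, hsubξ, hw2sq]
    have key : 0 ≤ b*(J - (b/4*w^2 + Pξ/4*(b-a)^2))*4 := by
      rw [hJ]
      linarith [sq_nonneg (b*w + 2*w2*(b-a)), mul_nonneg (sub_nonneg.2 hbP) (sq_nonneg (b-a))]
    have h2 : 0 ≤ J - (b/4*w^2 + Pξ/4*(b-a)^2) := by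
      by_contra h
      push_neg at h
      have := mul_pos hb0 (neg_pos.2 h)
      linarith
    have e1 : 0 ≤ (b - rl) * w^2 := mul_nonneg (by linarith) (sq_nonneg _)
    have e2 : 0 ≤ (Pξ - CP2l) * (b-a)^2 := mul_nonneg (by linarith) (sq_nonneg _)
    have e3 : 0 ≤ (rl/4 - c0) * w^2 := mul_nonneg (by linarith) (sq_nonneg _)
    have e4 : 0 ≤ (CP2l/4 - c0) * (b-a)^2 := mul_nonneg (by linarith) (sq_nonneg _)
    linarith
  · have hba : b < a := by
      rcases le_or_gt a b with h | h
      · rw [max_eq_right h] at hmax; linarith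
      · exact h
    have hξa : ξ < a := by rw [max_eq_left hba.le] at hmax; exact hmax
    rcases le_or_gt (3*b) a with h3 | h3
    · -- B1
      clear hc0a hc0b hc0c1 hc0c2
      have haP : 4*vt^2 ≤ a*Pξ := by
        linarith [mul_nonneg (sub_nonneg.2 hξa.le) hPpos.le, hsubξ]
      have hC1 : 0 ≤ 2*vt*(a-2*b) - b*w := by
        linarith [mul_le_mul_of_nonneg_left hwu hb0.le, mul_nonneg (sub_nonneg.2 h3) (by linarith : (0:ℝ) ≤ 2*vt)]
      have hC2 : 0 ≤ 2*vt*(a-2*b) + b*w := by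
        linarith [mul_le_mul_of_nonneg_left hwl hb0.le, mul_nonneg (sub_nonneg.2 h3) (by linarith : (0:ℝ) ≤ 2*vt)]
      have hT : 0 ≤ b*w^2 + 2*w2*(b-a)*w + 4*vt^2*(a-2*b) := by
        clear hc0B hc0 hJ
        nlinarith [mul_nonneg (mul_nonneg (by linarith : (0:ℝ) ≤ vt + w2) (by linarith : (0:ℝ) ≤ 2*vt - w)) hC1,
          mul_nonneg (mul_nonneg (by linarith : (0:ℝ) ≤ vt - w2) (by linarith : (0:ℝ) ≤ 2*vt + w)) hC2]
      have hid : 2*a*J = a*(b*w^2 + 2*w2*(b-a)*w + 4*vt^2*(a-2*b)) + (a*Pξ - 4*vt^2)*(b-a)^2 + 4*vt^2*b^2 := by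
        rw [hJ]; ring
      have h2aJ : 4*vt^2*b^2 ≤ 2*a*J := by
        have e1 : 0 ≤ a*(b*w^2 + 2*w2*(b-a)*w + 4*vt^2*(a-2*b)) := mul_nonneg ha0.le hT
        have e2 : 0 ≤ (a*Pξ - 4*vt^2)*(b-a)^2 := mul_nonneg (by linarith) (sq_nonneg _)
        linarith
      clear hid hT hC1 hC2 haP
      have hJ0 : 0 ≤ J :=
        le_of_mul_le_mul_left (by linarith [mul_nonneg (mul_nonneg (by norm_num : (0:ℝ) ≤ 4) (sq_nonneg vt)) (sq_nonneg b), h2aJ] : 2*a*0 ≤ 2*a*J) (by linarith)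
      have hb2 : rl^2 ≤ b^2 := pow_le_pow_left₀ hrl.le hbl 2
      have haJ : 2*vt^2*rl^2 ≤ a*J := by
        have e4 : 0 ≤ vt^2*(b^2 - rl^2) := mul_nonneg (sq_nonneg vt) (by linarith)
        linarith
      have hruJ : vt^2*rl^2 ≤ ru*J := by
        have e3 : a*J ≤ ru*J := mul_le_mul_of_nonneg_right hau hJ0
        have e5 : 0 ≤ vt^2*rl^2 := mul_nonneg (sq_nonneg vt) (sq_nonneg rl)
        linarith
      clear h2aJ hb2 haJ
      have hM : (0:ℝ) < (ru-rl)^2 + 4*vt^2 := by positivity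
      have hbound : (b-a)^2 + w^2 ≤ (ru-rl)^2 + 4*vt^2 := by
        have h1 : (b-a)^2 ≤ (ru-rl)^2 := sq_le_sq' (by linarith) (by linarith)
        have h2 : w^2 ≤ (2*vt)^2 := sq_le_sq' (by linarith) hwu
        linarith [h1, h2]
      have hc0M : c0 * ((ru-rl)^2 + 4*vt^2) ≤ vt^2*rl^2/ru := by
        have h5 := mul_le_mul_of_nonneg_right hc0B hM.le
        calc c0 * ((ru-rl)^2 + 4*vt^2)
            ≤ vt^2*rl^2/(ru*((ru-rl)^2 + 4*vt^2)) * ((ru-rl)^2 + 4*vt^2) := h5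
          _ = vt^2*rl^2/ru := by
              rw [div_mul_eq_mul_div, mul_comm ru ((ru-rl)^2 + 4*vt^2), ← div_div,
                mul_div_assoc, div_self hM.ne', mul_one]
      calc c0 * ((b-a)^2 + w^2) ≤ c0 * ((ru-rl)^2 + 4*vt^2) := mul_le_mul_of_nonneg_left hbound hc0.le
        _ ≤ vt^2*rl^2/ru := hc0M
        _ ≤ J := by rw [div_le_iff₀ (by linarith : (0:ℝ) < ru)]; linarith [hruJ]
    · -- B2
      clear hc0a hc0b hc0B hwl hwu
      have hpos : 0 ≤ ((b*Pξ - w2^2)*ru - vt^2*b)*ξ := by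
        have e1 : 0 ≤ ((ξ*Pξ) - 4*vt^2)*(b*ru) := mul_nonneg (by linarith) (by positivity)
        have e2 : 0 ≤ (vt^2 - w2^2)*(ξ*ru) := mul_nonneg (by linarith)
          (mul_nonneg (by linarith) hru0.le)
        have e3 : 0 ≤ (3*b - ξ)*(vt^2*ru) := mul_nonneg (by linarith) (by positivity)
        have e4 : 0 ≤ (ru - ξ)*(vt^2*b) := mul_nonneg (by linarith) (by positivity)
        linarith [e1, e2, e3, e4]
      have hkey : vt^2*b ≤ (b*Pξ - w2^2)*ru := by
        clear hc0c1 hc0c2 hc0 hJ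
        nlinarith [hpos, hξ0]
      have hidA : ru*(2*b*J) = ru*((b*w + w2*(b-a))^2) + ru*((b*Pξ - w2^2)*(b-a)^2) := by
        rw [hJ]; ring
      have e5 : (vt^2*b)*(b-a)^2 ≤ ((b*Pξ - w2^2)*ru)*(b-a)^2 :=
        mul_le_mul_of_nonneg_right hkey (sq_nonneg _)
      have h6 : b*(vt^2*(b-a)^2) ≤ b*(2*ru*J) := by
        have e6 : 0 ≤ ru*((b*w + w2*(b-a))^2) := mul_nonneg hru0.le (sq_nonneg _)
        linarith [hidA, e5, e6]
      have target' : vt^2*(b-a)^2 ≤ 2*ru*J := le_of_mul_le_mul_left h6 hb0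
      have hJ0 : 0 ≤ J :=
        le_of_mul_le_mul_left (by linarith [target', sq_nonneg (vt*(b-a))] : (2*ru)*0 ≤ (2*ru)*J) (by linarith)
      have hidB : 4*b*J = (b*w + 2*w2*(b-a))^2 + b^2*w^2 + 2*b*Pξ*(b-a)^2 - 4*w2^2*(b-a)^2 := by
        rw [hJ]; ring
      have hBb : b^2*w^2 - 4*vt^2*(b-a)^2 ≤ 4*b*J := by
        have e7 : 0 ≤ (vt^2 - w2^2)*(b-a)^2 := mul_nonneg (by linarith) (sq_nonneg _)
        have e8 : 0 ≤ 2*b*Pξ*(b-a)^2 := by positivity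
        linarith [hidB, e7, e8, sq_nonneg (b*w + 2*w2*(b-a))]
      clear hidA hidB hpos hkey e5 h6
      have hb2 : rl^2 ≤ b^2 := pow_le_pow_left₀ hrl.le hbl 2
      have hc0c1' : 4*ru*c0 ≤ vt^2 := by
        rw [le_div_iff₀ (by positivity : (0:ℝ) < 4*ru)] at hc0c1; linarith
      have hc0c2' : 48*ru^2*c0 ≤ rl^3 := by
        rw [le_div_iff₀ (by positivity : (0:ℝ) < 48*ru^2)] at hc0c2; linarith
      have n1 : 4*ru*c0*(12*ru*b*(b-a)^2) ≤ vt^2*(12*ru*b*(b-a)^2) :=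
        mul_le_mul_of_nonneg_right hc0c1' (by positivity)
      have n2 : 48*ru^2*c0*(b*w^2) ≤ rl^3*(b*w^2) :=
        mul_le_mul_of_nonneg_right hc0c2' (by positivity)
      have n5 : rl^2*(rl*b*w^2) ≤ b^2*(rl*b*w^2) :=
        mul_le_mul_of_nonneg_right hb2 (by positivity)
      have n3 : 16*b*ru*(vt^2*(b-a)^2) ≤ 16*b*ru*(2*ru*J) :=
        mul_le_mul_of_nonneg_left target' (by positivity)
      have n4 : rl*b*(b^2*w^2 - 4*vt^2*(b-a)^2) ≤ rl*b*(4*b*J) :=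
        mul_le_mul_of_nonneg_left hBb (by positivity)
      have n6 : (4*b*vt^2*(b-a)^2)*rl ≤ (4*b*vt^2*(b-a)^2)*ru :=
        mul_le_mul_of_nonneg_left hlu.le (by positivity)
      have n7 : (rl*b)*(4*b*J) ≤ (ru*ru)*(4*b*J) := by
        have h9 : rl*b ≤ ru*ru := mul_le_mul hlu.le hbu hb0.le hru0.le
        exact mul_le_mul_of_nonneg_right h9 (mul_nonneg (by linarith) hJ0)
      have n8 : (0:ℝ) ≤ (12*ru^2*b)*J := mul_nonneg (by positivity) hJ0
      have final : (48*ru^2*b)*(c0*((b-a)^2+w^2)) ≤ (48*ru^2*b)*J := by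
        linarith [n1, n2, n3, n4, n5, n6, n7, n8]
      exact le_of_mul_le_mul_left final (by positivity)

lemma upperJ (rl ru vt CP2u b a Pξ w2 w : ℝ)
    (hrl : 0 < rl) (hlu : rl < ru) (hvt : 0 < vt)
    (hbl : rl ≤ b) (hbu : b ≤ ru) (hPu : Pξ ≤ CP2u) (hCP2u : 0 < CP2u)
    (hw2l : -vt ≤ w2) (hw2u : w2 ≤ vt) :
    b/2*w^2 + w2*(b-a)*w + Pξ*(b-a)^2/2 ≤ ((ru + vt + CP2u)/2 + 1) * ((b-a)^2 + w^2) := by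
  have u1 : 0 ≤ (vt - w2)*((b-a)+w)^2 := mul_nonneg (by linarith) (sq_nonneg _)
  have u2 : 0 ≤ (vt + w2)*((b-a)-w)^2 := mul_nonneg (by linarith) (sq_nonneg _)
  have u3 : 0 ≤ (ru - b)*w^2 := mul_nonneg (by linarith) (sq_nonneg _)
  have u4 : 0 ≤ (CP2u - Pξ)*(b-a)^2 := mul_nonneg (by linarith) (sq_nonneg _)
  linarith [u1, u2, u3, u4, sq_nonneg (b-a), sq_nonneg w,
    mul_nonneg hCP2u.le (sq_nonneg w), mul_nonneg (by linarith : (0:ℝ) ≤ ru) (sq_nonneg (b-a)),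
    mul_nonneg hvt.le (sq_nonneg (b-a)), mul_nonneg hvt.le (sq_nonneg w)]

set_option maxHeartbeats 1000000 in
lemma pointwise_bounds (rl ru vt CP2l CP2u : ℝ) (P P' P'' : ℝ → ℝ)
    (hrl : 0 < rl) (hlu : rl < ru) (hvt : 0 < vt) (hCP2l : 0 < CP2l)
    (hP' : ∀ r ∈ Icc rl ru, HasDerivAt P (P' r) r)
    (hP'' : ∀ r ∈ Icc rl ru, HasDerivAt P' (P'' r) r)
    (hP2 : ∀ r ∈ Icc rl ru, CP2l ≤ P'' r ∧ P'' r ≤ CP2u)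
    (hsub : ∀ r ∈ Icc rl ru, 4 * vt ^ 2 ≤ r * P'' r) :
    ∃ c0 C0 : ℝ, 0 < c0 ∧ 0 < C0 ∧
      ∀ b w1 a w2 : ℝ, b ∈ Icc rl ru → a ∈ Icc rl ru → |w1| ≤ vt → |w2| ≤ vt →
        c0 * ((b - a) ^ 2 + (w1 - w2) ^ 2) ≤
            b * w1 ^ 2 / 2 + P b - a * w2 ^ 2 / 2 - P a - (w2 ^ 2 / 2 + P' a) * (b - a) - a * w2 * (w1 - w2) ∧
          b * w1 ^ 2 / 2 + P b - a * w2 ^ 2 / 2 - P a - (w2 ^ 2 / 2 + P' a) * (b - a) - a * w2 * (w1 - w2) ≤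
            C0 * ((b - a) ^ 2 + (w1 - w2) ^ 2) := by
  have hru0 : 0 < ru := hrl.trans hlu
  have hCP2u : 0 < CP2u := lt_of_lt_of_le hCP2l
    (le_trans (hP2 rl ⟨le_refl rl, hlu.le⟩).1 (hP2 rl ⟨le_refl rl, hlu.le⟩).2)
  set c0 := min (min (rl/4) (CP2l/4))
      (min (vt^2*rl^2/(ru*((ru-rl)^2 + 4*vt^2))) (min (vt^2/(4*ru)) (rl^3/(48*ru^2)))) with hc0def
  have hc0 : 0 < c0 := by
    rw [hc0def]
    apply lt_min
    · exact lt_min (by positivity) (by positivity)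
    · exact lt_min (by positivity) (lt_min (by positivity) (by positivity))
  have hc0a : c0 ≤ rl/4 := (min_le_left _ _).trans (min_le_left _ _)
  have hc0b : c0 ≤ CP2l/4 := (min_le_left _ _).trans (min_le_right _ _)
  have hc0B : c0 ≤ vt^2*rl^2/(ru*((ru-rl)^2 + 4*vt^2)) := (min_le_right _ _).trans (min_le_left _ _)
  have hc0c1 : c0 ≤ vt^2/(4*ru) := (min_le_right _ _).trans ((min_le_right _ _).trans (min_le_left _ _))
  have hc0c2 : c0 ≤ rl^3/(48*ru^2) := (min_le_right _ _).trans ((min_le_right _ _).trans (min_le_right _ _))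
  clear_value c0
  clear hc0def
  refine ⟨c0, (ru + vt + CP2u)/2 + 1, hc0, by positivity, ?_⟩
  intro b w1 a w2 hb ha hw1 hw2
  obtain ⟨hw1l, hw1u⟩ := abs_le.mp hw1
  obtain ⟨hw2l, hw2u⟩ := abs_le.mp hw2
  obtain ⟨hbl, hbu⟩ := hb
  obtain ⟨hal, hau⟩ := ha
  rcases eq_or_ne a b with heq | hne
  · subst heq
    have hid0 : a * w1 ^ 2 / 2 + P a - a * w2 ^ 2 / 2 - P a - (w2 ^ 2 / 2 + P' a) * (a - a)
        - a * w2 * (w1 - w2) = a/2 * (w1 - w2)^2 := by ring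
    rw [hid0]
    constructor
    · have h1 : 0 ≤ (a/2 - c0) * (w1-w2)^2 := mul_nonneg (by linarith) (sq_nonneg _)
      nlinarith [h1, sq_nonneg (w1-w2)]
    · have h1 : 0 ≤ ((ru + vt + CP2u)/2 + 1 - a/2) * (w1-w2)^2 :=
        mul_nonneg (by linarith) (sq_nonneg _)
      nlinarith [h1, sq_nonneg (a-a)]
  · obtain ⟨ξ, hξm, ⟨hmin, hmax⟩, hTay⟩ :=
      taylorP rl ru P P' P'' hP' hP'' a b ⟨hal, hau⟩ ⟨hbl, hbu⟩ hne
    obtain ⟨hPl, hPu⟩ := hP2 ξ hξm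
    have hsubξ := hsub ξ hξm
    obtain ⟨hξl, hξu⟩ := hξm
    have hEJ : b * w1 ^ 2 / 2 + P b - a * w2 ^ 2 / 2 - P a - (w2 ^ 2 / 2 + P' a) * (b - a)
        - a * w2 * (w1 - w2)
        = b/2*(w1-w2)^2 + w2*(b-a)*(w1-w2) + P'' ξ*(b-a)^2/2 := by
      linear_combination hTay
    rw [hEJ]
    constructor
    · exact lowerJ rl ru vt CP2l c0 b a ξ (P'' ξ) w2 (w1 - w2) hrl hlu hvt hCP2l hbl hbu hal hau
        hξl hξu hmax hPl hsubξ hw2l hw2u (by linarith) (by linarith)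
        hc0 hc0a hc0b hc0B hc0c1 hc0c2
    · exact upperJ rl ru vt CP2u b a (P'' ξ) w2 (w1 - w2) hrl hlu hvt hbl hbu hPu hCP2u hw2l hw2u


set_option maxHeartbeats 1000000 in
/-- Norm equivalence of the relative energy (Lemma 4.1): under the subsonic condition
`ρP''(ρ) ≥ 4ṽ²` on `[ρ̲, ρ̄]`, there are constants `c₀, C₀ > 0` such that for all
measurable states `u₁ = (ρ₁,v₁)`, `u₂ = (ρ₂,v₂)` on `(0,ℓ)` with
`ρ̲ ≤ ρᵢ ≤ ρ̄` and `|vᵢ| ≤ ṽ` a.e.,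
`c₀ ∫ ((ρ₁−ρ₂)² + (v₁−v₂)²) ≤ H(u₁|u₂) ≤ C₀ ∫ ((ρ₁−ρ₂)² + (v₁−v₂)²)`,
where `H(u₁|u₂) = ∫ [½ρ₁v₁² + P(ρ₁) − ½ρ₂v₂² − P(ρ₂) − (½v₂² + P'(ρ₂))(ρ₁−ρ₂) − ρ₂v₂(v₁−v₂)]`. -/
theorem stmt_3 (rl ru vt ℓ CP2l CP2u : ℝ) (P P' P'' P''' : ℝ → ℝ)
    (hrl : 0 < rl) (hlu : rl < ru) (hvt : 0 < vt) (hℓ : 0 < ℓ)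
    (hP' : ∀ r ∈ Icc rl ru, HasDerivAt P (P' r) r)
    (hP'' : ∀ r ∈ Icc rl ru, HasDerivAt P' (P'' r) r)
    (hP''' : ∀ r ∈ Icc rl ru, HasDerivAt P'' (P''' r) r)
    (hCP2l : 0 < CP2l)
    (hP2 : ∀ r ∈ Icc rl ru, CP2l ≤ P'' r ∧ P'' r ≤ CP2u)
    (hsub : ∀ r ∈ Icc rl ru, 4 * vt ^ 2 ≤ r * P'' r) :
    ∃ c0 C0 : ℝ, 0 < c0 ∧ 0 < C0 ∧
      ∀ ρ1 v1 ρ2 v2 : ℝ → ℝ,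
        Measurable ρ1 → Measurable v1 → Measurable ρ2 → Measurable v2 →
        (∀ᵐ x ∂(volume.restrict (Ioo (0:ℝ) ℓ)),
          ρ1 x ∈ Icc rl ru ∧ ρ2 x ∈ Icc rl ru ∧ |v1 x| ≤ vt ∧ |v2 x| ≤ vt) →
        c0 * (∫ x in Ioo (0:ℝ) ℓ, ((ρ1 x - ρ2 x) ^ 2 + (v1 x - v2 x) ^ 2)) ≤
            (∫ x in Ioo (0:ℝ) ℓ,
              (ρ1 x * v1 x ^ 2 / 2 + P (ρ1 x) - ρ2 x * v2 x ^ 2 / 2 - P (ρ2 x) -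
                (v2 x ^ 2 / 2 + P' (ρ2 x)) * (ρ1 x - ρ2 x) - ρ2 x * v2 x * (v1 x - v2 x))) ∧
          (∫ x in Ioo (0:ℝ) ℓ,
              (ρ1 x * v1 x ^ 2 / 2 + P (ρ1 x) - ρ2 x * v2 x ^ 2 / 2 - P (ρ2 x) -
                (v2 x ^ 2 / 2 + P' (ρ2 x)) * (ρ1 x - ρ2 x) - ρ2 x * v2 x * (v1 x - v2 x))) ≤
            C0 * (∫ x in Ioo (0:ℝ) ℓ, ((ρ1 x - ρ2 x) ^ 2 + (v1 x - v2 x) ^ 2)) := by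
  obtain ⟨c0, C0, hc0, hC0, hpt⟩ :=
    pointwise_bounds rl ru vt CP2l CP2u P P' P'' hrl hlu hvt hCP2l hP' hP'' hP2 hsub
  refine ⟨c0, C0, hc0, hC0, ?_⟩
  intro ρ1 v1 ρ2 v2 hm1 hm2 hm3 hm4 hae
  have hμfin : IsFiniteMeasure (volume.restrict (Ioo (0:ℝ) ℓ)) := by
    constructor
    rw [Measure.restrict_apply MeasurableSet.univ, Set.univ_inter, Real.volume_Ioo]
    exact ENNReal.ofReal_lt_top
  set μ := volume.restrict (Ioo (0:ℝ) ℓ) with hμdef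
  -- continuity of P, P' on Icc
  have hPc : ContinuousOn P (Icc rl ru) := fun x hx => ((hP' x hx).continuousAt).continuousWithinAt
  have hP'c : ContinuousOn P' (Icc rl ru) := fun x hx => ((hP'' x hx).continuousAt).continuousWithinAt
  set Pe : ℝ → ℝ := fun x => ((Icc rl ru).restrict P) (projIcc rl ru hlu.le x) with hPe
  set P'e : ℝ → ℝ := fun x => ((Icc rl ru).restrict P') (projIcc rl ru hlu.le x) with hP'e
  have hPec : Continuous Pe := hPc.restrict.comp continuous_projIcc
  have hP'ec : Continuous P'e := hP'c.restrict.comp continuous_projIcc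
  have hPeeq : ∀ x ∈ Icc rl ru, Pe x = P x := by
    intro x hx
    rw [hPe]
    simp only [projIcc_of_mem hlu.le hx, Set.restrict_apply]
    rfl
  have hP'eeq : ∀ x ∈ Icc rl ru, P'e x = P' x := by
    intro x hx
    rw [hP'e]
    simp only [projIcc_of_mem hlu.le hx, Set.restrict_apply]
    rfl
  set f : ℝ → ℝ := fun x => (ρ1 x - ρ2 x) ^ 2 + (v1 x - v2 x) ^ 2 with hfdef
  set g : ℝ → ℝ := fun x => ρ1 x * v1 x ^ 2 / 2 + P (ρ1 x) - ρ2 x * v2 x ^ 2 / 2 - P (ρ2 x) -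
      (v2 x ^ 2 / 2 + P' (ρ2 x)) * (ρ1 x - ρ2 x) - ρ2 x * v2 x * (v1 x - v2 x) with hgdef
  set g' : ℝ → ℝ := fun x => ρ1 x * v1 x ^ 2 / 2 + Pe (ρ1 x) - ρ2 x * v2 x ^ 2 / 2 - Pe (ρ2 x) -
      (v2 x ^ 2 / 2 + P'e (ρ2 x)) * (ρ1 x - ρ2 x) - ρ2 x * v2 x * (v1 x - v2 x) with hg'def
  have hgg' : g' =ᵐ[μ] g := by
    filter_upwards [hae] with x hx
    rw [hgdef, hg'def]
    simp only [hPeeq _ hx.1, hPeeq _ hx.2.1, hP'eeq _ hx.2.1]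
  have hg'meas : Measurable g' := by
    rw [hg'def]
    fun_prop
  have hfmeas : Measurable f := by
    rw [hfdef]
    fun_prop
  have haef : ∀ᵐ x ∂μ, c0 * f x ≤ g x ∧ g x ≤ C0 * f x := by
    filter_upwards [hae] with x hx
    exact hpt (ρ1 x) (v1 x) (ρ2 x) (v2 x) hx.1 hx.2.1 hx.2.2.1 hx.2.2.2
  have hfbound : ∀ᵐ x ∂μ, ‖f x‖ ≤ (ru - rl) ^ 2 + (2*vt) ^ 2 := by
    filter_upwards [hae] with x hx
    simp only [hfdef, Real.norm_eq_abs]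
    obtain ⟨⟨h1, h2⟩, ⟨h3, h4⟩, h5, h6⟩ := hx
    obtain ⟨h7, h8⟩ := abs_le.mp h5
    obtain ⟨h9, h10⟩ := abs_le.mp h6
    rw [abs_of_nonneg (by positivity)]
    have e1 : (ρ1 x - ρ2 x) ^ 2 ≤ (ru - rl) ^ 2 := sq_le_sq' (by linarith) (by linarith)
    have e2 : (v1 x - v2 x) ^ 2 ≤ (2*vt) ^ 2 := sq_le_sq' (by linarith) (by linarith)
    linarith
  have hfint : Integrable f μ :=
    ⟨hfmeas.aestronglyMeasurable, HasFiniteIntegral.of_bounded hfbound⟩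
  have hf0 : ∀ᵐ x ∂μ, 0 ≤ f x := by
    filter_upwards with x
    simp only [hfdef]
    positivity
  have hgbound : ∀ᵐ x ∂μ, ‖g x‖ ≤ C0 * ((ru - rl) ^ 2 + (2*vt) ^ 2) := by
    filter_upwards [haef, hfbound, hf0] with x hx hfb hf0x
    rw [Real.norm_eq_abs, abs_le]
    rw [Real.norm_eq_abs, abs_of_nonneg hf0x] at hfb
    constructor
    · have : 0 ≤ c0 * f x := mul_nonneg hc0.le hf0x
      have h2 : 0 ≤ C0 * ((ru - rl) ^ 2 + (2*vt) ^ 2) := by positivity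
      linarith [hx.1]
    · have := mul_le_mul_of_nonneg_left hfb hC0.le
      linarith [hx.2]
  have hgint : Integrable g μ :=
    ⟨hg'meas.aestronglyMeasurable.congr hgg', HasFiniteIntegral.of_bounded hgbound⟩
  constructor
  · rw [← MeasureTheory.integral_const_mul]
    exact integral_mono_ae (hfint.const_mul c0) hgint (haef.mono fun x hx => hx.1)
  · rw [← MeasureTheory.integral_const_mul]
    exact integral_mono_ae hgint (hfint.const_mul C0) (haef.mono fun x hx => hx.2)
end

section
/- Solvability of the junction coupling conditions (Lemma 3.1): Let P : (0,∞) → ℝ be three times continuously differentiable with P''(ρ) > 0 for all ρ > 0, fix ρ_ref > 0, set p'(ρ) := ρP''(ρ), c := √(p'(ρ_ref)), P̃(ρ) := ∫_{ρ_ref}^ρ √(p'(s))/(c s) ds (a strictly increasing function with inverse P̃⁻¹ near 0), and let n ≥ 1. Define F : ℝⁿ × ℝⁿ → ℝⁿ (on a neighborhood of (0,0)) by F₁(R₋, R₊) = Σ_{i=1}^n P̃⁻¹(½(R₊^i + R₋^i))(R₊^i − R₋^i) and, for i = 2,…,n, F_i(R₋, R₊) = (c²/8)(R₊^i − R₋^i)²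 + P'(P̃⁻¹(½(R₊^i + R₋^i))) − (c²/8)(R₊^{i−1} − R₋^{i−1})² − P'(P̃⁻¹(½(R₊^{i−1} + R₋^{i−1}))). Then there exist S_max > 0, an open neighborhood W ⊆ ℝⁿ of 0, a constant C(n) > 0, and a unique continuous map f : {R₋ ∈ ℝⁿ : |R₋|_∞ ≤ S_max} → W such that F(R₋, f(R₋)) = 0 for all such R₋, and |f(R₋)|_∞ ≤ C(n) |R₋|_∞. -/
open Set

set_option maxHeartbeats 1000000 in
/-- Solvability of the junction coupling conditions (Lemma 3.1): with `p'(ρ) = ρP''(ρ)`,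
`c = √(p'(ρ_ref))`, `P̃(ρ) = ∫_{ρ_ref}^ρ √(p'(s))/(cs) ds` (strictly increasing with
local inverse `P̃⁻¹` near `0`), the coupling map
`F₁(R₋,R₊) = Σᵢ P̃⁻¹(½(R₊ⁱ + R₋ⁱ))(R₊ⁱ − R₋ⁱ)` and, for `i ≥ 2`,
`Fᵢ(R₋,R₊) = (c²/8)(R₊ⁱ − R₋ⁱ)² + P'(P̃⁻¹(½(R₊ⁱ + R₋ⁱ))) − (same at i−1)`
admits, for some `S_max > 0`, open `W ∋ 0` and `C(n) > 0`, a unique continuous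
`f : {‖R₋‖_∞ ≤ S_max} → W` with `F(R₋, f(R₋)) = 0` and `‖f(R₋)‖_∞ ≤ C(n)‖R₋‖_∞`. -/
theorem stmt_8 (n : ℕ) (hn : 1 ≤ n)
    (P P' P'' P''' : ℝ → ℝ)
    (hP' : ∀ r : ℝ, 0 < r → HasDerivAt P (P' r) r)
    (hP'' : ∀ r : ℝ, 0 < r → HasDerivAt P' (P'' r) r)
    (hP''' : ∀ r : ℝ, 0 < r → HasDerivAt P'' (P''' r) r)
    (hP'''cont : ContinuousOn P''' (Ioi (0:ℝ)))
    (hconv : ∀ r : ℝ, 0 < r → 0 < P'' r)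
    (rref : ℝ) (hrref : 0 < rref)
    (c : ℝ) (hc : c = Real.sqrt (rref * P'' rref))
    (Pt : ℝ → ℝ) (hPt : ∀ r : ℝ, Pt r = ∫ s in rref..r, Real.sqrt (s * P'' s) / (c * s))
    (Pinv : ℝ → ℝ) (ε : ℝ) (hε : 0 < ε)
    (hPinv : ∀ y : ℝ, |y| ≤ ε → 0 < Pinv y ∧ Pt (Pinv y) = y)
    (hPinvcont : ContinuousOn Pinv (Icc (-ε) ε))
    (F : (Fin n → ℝ) → (Fin n → ℝ) → (Fin n → ℝ))
    (hF : ∀ (Rm Rp : Fin n → ℝ) (i : Fin n), F Rm Rp i =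
      if (i : ℕ) = 0 then
        ∑ j : Fin n, Pinv ((Rp j + Rm j) / 2) * (Rp j - Rm j)
      else
        c ^ 2 / 8 * (Rp i - Rm i) ^ 2 + P' (Pinv ((Rp i + Rm i) / 2)) -
          (c ^ 2 / 8 * (Rp (⟨(i : ℕ) - 1, lt_of_le_of_lt (Nat.sub_le _ _) i.isLt⟩ : Fin n) - Rm (⟨(i : ℕ) - 1, lt_of_le_of_lt (Nat.sub_le _ _) i.isLt⟩ : Fin n)) ^ 2 +
            P' (Pinv ((Rp (⟨(i : ℕ) - 1, lt_of_le_of_lt (Nat.sub_le _ _) i.isLt⟩ : Fin n) + Rm (⟨(i : ℕ) - 1, lt_of_le_of_lt (Nat.sub_le _ _) i.isLt⟩ : Fin n)) / 2)))) :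
    ∃ Smax : ℝ, 0 < Smax ∧
      ∃ W : Set (Fin n → ℝ), IsOpen W ∧ (0 : Fin n → ℝ) ∈ W ∧
        ∃ C : ℝ, 0 < C ∧
          ∃ f : (Fin n → ℝ) → (Fin n → ℝ),
            ContinuousOn f {R : Fin n → ℝ | ‖R‖ ≤ Smax} ∧
            (∀ Rm : Fin n → ℝ, ‖Rm‖ ≤ Smax →
              f Rm ∈ W ∧ F Rm (f Rm) = 0 ∧ ‖f Rm‖ ≤ C * ‖Rm‖) ∧
            ∀ g : (Fin n → ℝ) → (Fin n → ℝ),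
              ContinuousOn g {R : Fin n → ℝ | ‖R‖ ≤ Smax} →
              (∀ Rm : Fin n → ℝ, ‖Rm‖ ≤ Smax → g Rm ∈ W ∧ F Rm (g Rm) = 0) →
              ∀ Rm : Fin n → ℝ, ‖Rm‖ ≤ Smax → g Rm = f Rm := by
  have hP''cont : ContinuousOn P'' (Ioi (0:ℝ)) :=
    fun r hr => (hP''' r hr).continuousAt.continuousWithinAt
  have hcpos : 0 < c := by
    rw [hc]; exact Real.sqrt_pos.mpr (mul_pos hrref (hconv rref hrref))
  have hgcont : ContinuousOn (fun s : ℝ => Real.sqrt (s * P'' s) / (c * s)) (Ioi (0:ℝ)) := by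
    apply ContinuousOn.div
    · exact (continuousOn_id.mul hP''cont).sqrt
    · exact continuousOn_const.mul continuousOn_id
    · intro s hs; exact ne_of_gt (mul_pos hcpos hs)
  have hgpos : ∀ s : ℝ, 0 < s → 0 < Real.sqrt (s * P'' s) / (c * s) := fun s hs =>
    div_pos (Real.sqrt_pos.mpr (mul_pos hs (hconv s hs))) (mul_pos hcpos hs)
  obtain ⟨hρ0pos, hPtρ0⟩ := hPinv 0 (by simpa using hε.le)
  set ρ0 := Pinv 0 with hρ0
  have hII : IntervalIntegrable (fun s : ℝ => Real.sqrt (s * P'' s) / (c * s))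
      MeasureTheory.volume rref ρ0 := by
    apply ContinuousOn.intervalIntegrable
    apply hgcont.mono
    intro x hx
    exact lt_of_lt_of_le (lt_min hrref hρ0pos) hx.1
  have hmeas : StronglyMeasurableAtFilter (fun s : ℝ => Real.sqrt (s * P'' s) / (c * s))
      (nhds ρ0) MeasureTheory.volume :=
    ContinuousOn.stronglyMeasurableAtFilter isOpen_Ioi hgcont ρ0 hρ0pos
  have hPtderiv : HasStrictDerivAt Pt (Real.sqrt (ρ0 * P'' ρ0) / (c * ρ0)) ρ0 := by
    have h := intervalIntegral.integral_hasStrictDerivAt_right hII hmeas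
      ((hgcont ρ0 hρ0pos).continuousAt (Ioi_mem_nhds hρ0pos))
    have hPtfun : Pt = fun r => ∫ s in rref..r, Real.sqrt (s * P'' s) / (c * s) := funext hPt
    rwa [← hPtfun] at h
  have hPinvCA : ContinuousAt Pinv 0 :=
    hPinvcont.continuousAt (Icc_mem_nhds (by linarith) hε)
  have hfg : ∀ᶠ y in nhds (0:ℝ), Pt (Pinv y) = y := by
    filter_upwards [Icc_mem_nhds (show -ε < (0:ℝ) by linarith) hε] with y hy
    exact (hPinv y (abs_le.mpr ⟨hy.1, hy.2⟩)).2
  have hPinvderiv : HasStrictDerivAt Pinv (Real.sqrt (ρ0 * P'' ρ0) / (c * ρ0))⁻¹ 0 :=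
    HasStrictDerivAt.of_local_left_inverse hPinvCA hPtderiv (ne_of_gt (hgpos ρ0 hρ0pos)) hfg
  have hP'strict : HasStrictDerivAt P' (P'' ρ0) ρ0 := by
    apply hasStrictDerivAt_of_hasDerivAt_of_continuousAt
    · filter_upwards [Ioi_mem_nhds hρ0pos] with r hr using hP'' r hr
    · exact (hP''cont ρ0 hρ0pos).continuousAt (Ioi_mem_nhds hρ0pos)
  have hG : HasStrictDerivAt (fun y => P' (Pinv y))
      (P'' ρ0 * (Real.sqrt (ρ0 * P'' ρ0) / (c * ρ0))⁻¹) 0 :=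
    hP'strict.comp 0 hPinvderiv
  set q' : ℝ := (Real.sqrt (ρ0 * P'' ρ0) / (c * ρ0))⁻¹ with hq'def
  have hq' : 0 < q' := inv_pos.mpr (hgpos ρ0 hρ0pos)
  have hP''pos : 0 < P'' ρ0 := hconv ρ0 hρ0pos
  have hF00 : F 0 0 = 0 := by
    funext i
    rw [hF]
    by_cases h : (i : ℕ) = 0
    · rw [if_pos h]; simp
    · rw [if_neg h]; simp
  -- CLM projections
  set PR : Fin n → ((Fin n → ℝ) × (Fin n → ℝ)) →L[ℝ] ℝ := fun j =>
    (ContinuousLinearMap.proj j).comp (ContinuousLinearMap.fst ℝ (Fin n → ℝ) (Fin n → ℝ)) with hPR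
  set QR : Fin n → ((Fin n → ℝ) × (Fin n → ℝ)) →L[ℝ] ℝ := fun j =>
    (ContinuousLinearMap.proj j).comp (ContinuousLinearMap.snd ℝ (Fin n → ℝ) (Fin n → ℝ)) with hQR
  have hQ : ∀ j : Fin n, HasStrictFDerivAt (fun x : (Fin n → ℝ) × (Fin n → ℝ) => x.2 j)
      (QR j) (0 : (Fin n → ℝ) × (Fin n → ℝ)) := fun j => (QR j).hasStrictFDerivAt
  have hP1 : ∀ j : Fin n, HasStrictFDerivAt (fun x : (Fin n → ℝ) × (Fin n → ℝ) => x.1 j)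
      (PR j) (0 : (Fin n → ℝ) × (Fin n → ℝ)) := fun j => (PR j).hasStrictFDerivAt
  -- inner half map
  have hhalf : ∀ j : Fin n, HasStrictFDerivAt
      (fun x : (Fin n → ℝ) × (Fin n → ℝ) => (x.2 j + x.1 j) / 2)
      (((1:ℝ)/2) • (QR j + PR j)) (0 : (Fin n → ℝ) × (Fin n → ℝ)) := by
    intro j
    have h := HasStrictDerivAt.comp_hasStrictFDerivAt (0 : (Fin n → ℝ) × (Fin n → ℝ))
      ((hasStrictDerivAt_id ((0:(Fin n → ℝ) × (Fin n → ℝ)).2 j + (0:(Fin n → ℝ) × (Fin n → ℝ)).1 j)).div_const 2)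
      ((hQ j).add (hP1 j))
    simpa [Function.comp_def] using h
  -- Pinv ∘ half
  have hPinvc : ∀ j : Fin n, HasStrictFDerivAt
      (fun x : (Fin n → ℝ) × (Fin n → ℝ) => Pinv ((x.2 j + x.1 j) / 2))
      (q' • (((1:ℝ)/2) • (QR j + PR j))) (0 : (Fin n → ℝ) × (Fin n → ℝ)) := by
    intro j
    have h := HasStrictDerivAt.comp_hasStrictFDerivAt_of_eq
      (0 : (Fin n → ℝ) × (Fin n → ℝ)) hPinvderiv (hhalf j) (by norm_num)
    simpa [Function.comp_def] using h
  -- product terms for F₁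
  have hmul : ∀ j : Fin n, HasStrictFDerivAt
      (fun x : (Fin n → ℝ) × (Fin n → ℝ) => Pinv ((x.2 j + x.1 j) / 2) * (x.2 j - x.1 j))
      (ρ0 • (QR j - PR j)) (0 : (Fin n → ℝ) × (Fin n → ℝ)) := by
    intro j
    have h := (hPinvc j).mul ((hQ j).sub (hP1 j))
    simpa [← hρ0, Pi.mul_def, Pi.sub_def] using h
  -- G ∘ half
  have hGc : ∀ j : Fin n, HasStrictFDerivAt
      (fun x : (Fin n → ℝ) × (Fin n → ℝ) => P' (Pinv ((x.2 j + x.1 j) / 2)))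
      ((P'' ρ0 * q' * (1/2)) • (QR j + PR j)) (0 : (Fin n → ℝ) × (Fin n → ℝ)) := by
    intro j
    have h := HasStrictDerivAt.comp_hasStrictFDerivAt_of_eq
      (0 : (Fin n → ℝ) × (Fin n → ℝ)) hG (hhalf j) (by norm_num)
    rw [smul_smul] at h
    simpa [Function.comp_def] using h
  -- square terms
  have hsq : ∀ j : Fin n, HasStrictFDerivAt
      (fun x : (Fin n → ℝ) × (Fin n → ℝ) => c ^ 2 / 8 * (x.2 j - x.1 j) ^ 2)
      (0 : ((Fin n → ℝ) × (Fin n → ℝ)) →L[ℝ] ℝ) (0 : (Fin n → ℝ) × (Fin n → ℝ)) := by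
    intro j
    have hpow := HasStrictDerivAt.comp_hasStrictFDerivAt_of_eq
      (0 : (Fin n → ℝ) × (Fin n → ℝ))
      (hasStrictDerivAt_pow 2 ((0:(Fin n → ℝ) × (Fin n → ℝ)).2 j - (0:(Fin n → ℝ) × (Fin n → ℝ)).1 j))
      ((hQ j).sub (hP1 j)) (by norm_num)
    have h := hpow.const_mul (c ^ 2 / 8)
    simpa [Function.comp_def] using h
  -- the derivative components
  set b : ℝ := P'' ρ0 * q' * (1/2) with hb
  set D : Fin n → (((Fin n → ℝ) × (Fin n → ℝ)) →L[ℝ] ℝ) := fun i =>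
    if (i : ℕ) = 0 then ρ0 • ∑ j : Fin n, (QR j - PR j)
    else b • (QR i + PR i) -
      b • (QR (⟨(i : ℕ) - 1, lt_of_le_of_lt (Nat.sub_le _ _) i.isLt⟩ : Fin n)
           + PR (⟨(i : ℕ) - 1, lt_of_le_of_lt (Nat.sub_le _ _) i.isLt⟩ : Fin n)) with hD
  have hcompD : ∀ i : Fin n, HasStrictFDerivAt
      (fun x : (Fin n → ℝ) × (Fin n → ℝ) => F x.1 x.2 i) (D i)
      (0 : (Fin n → ℝ) × (Fin n → ℝ)) := by
    intro i
    by_cases h : (i : ℕ) = 0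
    · have hfun : (fun x : (Fin n → ℝ) × (Fin n → ℝ) => F x.1 x.2 i)
          = fun x : (Fin n → ℝ) × (Fin n → ℝ) =>
              ∑ j : Fin n, Pinv ((x.2 j + x.1 j) / 2) * (x.2 j - x.1 j) := by
        funext x; rw [hF, if_pos h]
      have hDi : D i = ∑ j : Fin n, ρ0 • (QR j - PR j) := by
        rw [hD]; simp only [if_pos h]; rw [Finset.smul_sum]
      rw [hfun, hDi]
      exact HasStrictFDerivAt.fun_sum fun j _ => hmul j
    · set i' : Fin n := (⟨(i : ℕ) - 1, lt_of_le_of_lt (Nat.sub_le _ _) i.isLt⟩ : Fin n) with hi'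
      have hfun : (fun x : (Fin n → ℝ) × (Fin n → ℝ) => F x.1 x.2 i)
          = fun x : (Fin n → ℝ) × (Fin n → ℝ) =>
              c ^ 2 / 8 * (x.2 i - x.1 i) ^ 2 + P' (Pinv ((x.2 i + x.1 i) / 2)) -
                (c ^ 2 / 8 * (x.2 i' - x.1 i') ^ 2 + P' (Pinv ((x.2 i' + x.1 i') / 2))) := by
        funext x; rw [hF, if_neg h]
      have hDi : D i = b • (QR i + PR i) - b • (QR i' + PR i') := by
        rw [hD]; simp only [if_neg h]; rfl
      rw [hfun, hDi]
      have h1 := ((hsq i).add (hGc i)).sub ((hsq i').add (hGc i'))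
      simpa [Pi.add_def, Pi.sub_def] using h1
  -- full derivative
  set T : ((Fin n → ℝ) × (Fin n → ℝ)) →L[ℝ] ((Fin n → ℝ) × (Fin n → ℝ)) :=
    (ContinuousLinearMap.fst ℝ (Fin n → ℝ) (Fin n → ℝ)).prod (ContinuousLinearMap.pi D) with hT
  set Phi : ((Fin n → ℝ) × (Fin n → ℝ)) → ((Fin n → ℝ) × (Fin n → ℝ)) :=
    fun x => (x.1, F x.1 x.2) with hPhi
  have hTstrict : HasStrictFDerivAt Phi T (0 : (Fin n → ℝ) × (Fin n → ℝ)) := by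
    apply HasStrictFDerivAt.prodMk
    · exact (ContinuousLinearMap.fst ℝ (Fin n → ℝ) (Fin n → ℝ)).hasStrictFDerivAt
    · apply hasStrictFDerivAt_pi''
      intro i
      rw [ContinuousLinearMap.proj_pi]
      exact hcompD i
  -- injectivity of T
  have hTinj : Function.Injective T := by
    refine (injective_iff_map_eq_zero _).2 ?_
    rintro ⟨u, v⟩ huv
    have h1 : u = 0 := congrArg Prod.fst huv
    subst h1
    have h2 : ∀ i : Fin n, D i (0, v) = 0 := by
      intro i
      have := congrArg Prod.snd huv
      exact congrFun this i
    have hsum : ∑ j : Fin n, v j = 0 := by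
      have h0 := h2 ⟨0, hn⟩
      simp only [hD, if_pos (show ((⟨0, hn⟩ : Fin n) : ℕ) = 0 from rfl)] at h0
      simp only [hQR, hPR, ContinuousLinearMap.smul_apply, ContinuousLinearMap.coe_sum', Finset.sum_apply,
        ContinuousLinearMap.sub_apply, ContinuousLinearMap.coe_comp', Function.comp_apply,
        ContinuousLinearMap.proj_apply, ContinuousLinearMap.coe_fst', ContinuousLinearMap.coe_snd',
        Pi.zero_apply, sub_zero, smul_eq_mul] at h0
      rcases mul_eq_zero.mp h0 with h | h
      · exact absurd h (ne_of_gt hρ0pos)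
      · exact h
    have hstep : ∀ i : Fin n, (i : ℕ) ≠ 0 →
        v i = v ⟨(i : ℕ) - 1, lt_of_le_of_lt (Nat.sub_le _ _) i.isLt⟩ := by
      intro i h
      have h0 := h2 i
      simp only [hD, if_neg h] at h0
      simp only [hQR, hPR, ContinuousLinearMap.sub_apply, ContinuousLinearMap.smul_apply,
        ContinuousLinearMap.add_apply, ContinuousLinearMap.coe_comp', Function.comp_apply,
        ContinuousLinearMap.proj_apply, ContinuousLinearMap.coe_fst', ContinuousLinearMap.coe_snd',
        Pi.zero_apply, add_zero, smul_eq_mul] at h0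
      have hbne : b ≠ 0 := ne_of_gt (mul_pos (mul_pos hP''pos hq') (by norm_num))
      exact mul_left_cancel₀ hbne (sub_eq_zero.mp h0)
    have hconstv : ∀ (k : ℕ) (hk : k < n), v ⟨k, hk⟩ = v ⟨0, hn⟩ := by
      intro k
      induction k with
      | zero => intro hk; rfl
      | succ m ih =>
        intro hk
        have h := hstep ⟨m + 1, hk⟩ (by simp)
        rw [h]
        exact ih (by omega)
    have hv0 : v ⟨0, hn⟩ = 0 := by
      have hsum2 : ∑ j : Fin n, v j = (n : ℝ) * v ⟨0, hn⟩ := by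
        rw [Finset.sum_congr rfl (fun j _ => (hconstv j.1 j.2 : v j = v ⟨0, hn⟩)),
          Finset.sum_const, Finset.card_univ, Fintype.card_fin, nsmul_eq_mul]
      rw [hsum2] at hsum
      rcases mul_eq_zero.mp hsum with h | h
      · exact absurd h (by positivity)
      · exact h
    have hveq : v = 0 := funext fun i => by
      rw [(hconstv i.1 i.2 : v i = v ⟨0, hn⟩), hv0]; rfl
    simp [Prod.ext_iff, hveq]
  have hTsurj : Function.Surjective
      (T : ((Fin n → ℝ) × (Fin n → ℝ)) →ₗ[ℝ] ((Fin n → ℝ) × (Fin n → ℝ))) :=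
    LinearMap.injective_iff_surjective.mp hTinj
  let e : ((Fin n → ℝ) × (Fin n → ℝ)) ≃L[ℝ] ((Fin n → ℝ) × (Fin n → ℝ)) :=
    LinearEquiv.toContinuousLinearEquiv (LinearEquiv.ofBijective (↑T) ⟨hTinj, hTsurj⟩)
  have hecoe : (e : ((Fin n → ℝ) × (Fin n → ℝ)) →L[ℝ] ((Fin n → ℝ) × (Fin n → ℝ))) = T :=
    ContinuousLinearMap.ext fun x => rfl
  have hPhiStrict : HasStrictFDerivAt Phi
      (e : ((Fin n → ℝ) × (Fin n → ℝ)) →L[ℝ] ((Fin n → ℝ) × (Fin n → ℝ)))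
      (0 : (Fin n → ℝ) × (Fin n → ℝ)) := by rw [hecoe]; exact hTstrict
  set Psi := hPhiStrict.toOpenPartialHomeomorph Phi with hPsi
  have hPsicoe : ⇑Psi = Phi := hPhiStrict.toOpenPartialHomeomorph_coe
  have hsrc : (0 : (Fin n → ℝ) × (Fin n → ℝ)) ∈ Psi.source :=
    hPhiStrict.mem_toOpenPartialHomeomorph_source
  have hPhi00 : Phi 0 = 0 := by
    show ((0 : Fin n → ℝ), F 0 0) = (0 : (Fin n → ℝ) × (Fin n → ℝ))
    rw [hF00]
    rfl
  have htgt : (0 : (Fin n → ℝ) × (Fin n → ℝ)) ∈ Psi.target := by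
    have h := Psi.map_source hsrc
    rwa [hPsicoe, hPhi00] at h
  have hsymm0 : Psi.symm 0 = 0 := by
    have h := Psi.left_inv hsrc
    rwa [hPsicoe, hPhi00] at h
  have hstrictsymm : HasStrictFDerivAt (⇑Psi.symm)
      (e.symm : ((Fin n → ℝ) × (Fin n → ℝ)) →L[ℝ] ((Fin n → ℝ) × (Fin n → ℝ)))
      (0 : (Fin n → ℝ) × (Fin n → ℝ)) := by
    have h := hPhiStrict.to_localInverse
    rw [HasStrictFDerivAt.localInverse_def, ← hPsi, hPhi00] at h
    exact h
  obtain ⟨K, t, htmem, hlip⟩ := hstrictsymm.exists_lipschitzOnWith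
  obtain ⟨r1, hr1pos, hr1sub⟩ := Metric.mem_nhds_iff.mp
    (Filter.inter_mem htmem (Psi.open_target.mem_nhds htgt))
  obtain ⟨r2, hr2pos, hr2sub⟩ := Metric.mem_nhds_iff.mp (Psi.open_source.mem_nhds hsrc)
  set Kr : ℝ := (K : ℝ) with hKrdef
  have hKr : 0 ≤ Kr := K.coe_nonneg
  set Smax : ℝ := min (r1 / 2) ((r2 / 2) / (2 * (Kr + 1))) with hSmaxdef
  have hSpos : 0 < Smax := lt_min (by positivity) (by positivity)
  have hpairnorm : ∀ Rm : Fin n → ℝ, ‖((Rm, 0) : (Fin n → ℝ) × (Fin n → ℝ))‖ = ‖Rm‖ := by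
    intro Rm
    rw [Prod.norm_def]
    show max ‖Rm‖ ‖(0 : Fin n → ℝ)‖ = ‖Rm‖
    rw [norm_zero]
    exact max_eq_left (norm_nonneg Rm)
  have hmem1 : ∀ Rm : Fin n → ℝ, ‖Rm‖ ≤ Smax →
      ((Rm, 0) : (Fin n → ℝ) × (Fin n → ℝ)) ∈ t ∩ Psi.target := by
    intro Rm h
    apply hr1sub
    rw [Metric.mem_ball, dist_zero_right, hpairnorm]
    calc ‖Rm‖ ≤ Smax := h
      _ ≤ r1 / 2 := min_le_left _ _
      _ < r1 := by linarith
  have hbound : ∀ Rm : Fin n → ℝ, ‖Rm‖ ≤ Smax →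
      ‖Psi.symm ((Rm, 0) : (Fin n → ℝ) × (Fin n → ℝ))‖ ≤ Kr * ‖Rm‖ := by
    intro Rm h
    have h1 := hlip.dist_le_mul ((Rm, 0) : (Fin n → ℝ) × (Fin n → ℝ)) (hmem1 Rm h).1
      (0 : (Fin n → ℝ) × (Fin n → ℝ)) (mem_of_mem_nhds htmem)
    rw [hsymm0, dist_zero_right, dist_zero_right, hpairnorm] at h1
    exact h1
  have hsolve : ∀ Rm : Fin n → ℝ, ‖Rm‖ ≤ Smax →
      (Psi.symm ((Rm, 0) : (Fin n → ℝ) × (Fin n → ℝ))).1 = Rm ∧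
        F Rm ((Psi.symm ((Rm, 0) : (Fin n → ℝ) × (Fin n → ℝ))).2) = 0 := by
    intro Rm h
    have h1 := Psi.right_inv (hmem1 Rm h).2
    rw [hPsicoe] at h1
    have h11 : (Psi.symm ((Rm, 0) : (Fin n → ℝ) × (Fin n → ℝ))).1 = Rm :=
      congrArg Prod.fst h1
    have h12 : F (Psi.symm ((Rm, 0) : (Fin n → ℝ) × (Fin n → ℝ))).1
        ((Psi.symm ((Rm, 0) : (Fin n → ℝ) × (Fin n → ℝ))).2) = 0 :=
      congrArg Prod.snd h1
    rw [h11] at h12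
    exact ⟨h11, h12⟩
  have hKS : Kr * Smax < r2 / 2 := by
    have h1 : Kr * Smax ≤ Kr * ((r2 / 2) / (2 * (Kr + 1))) :=
      mul_le_mul_of_nonneg_left (min_le_right _ _) hKr
    have h2 : Kr * ((r2 / 2) / (2 * (Kr + 1))) < r2 / 2 := by
      rw [mul_div_assoc']
      rw [div_lt_iff₀ (by positivity)]
      nlinarith [mul_pos hr2pos (show (0:ℝ) < Kr + 2 by positivity)]
    linarith
  have hSr2 : Smax < r2 := by
    have h1 : (r2 / 2) / (2 * (Kr + 1)) ≤ r2 / 2 :=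
      div_le_self (by positivity) (by nlinarith)
    have := min_le_right (r1 / 2) ((r2 / 2) / (2 * (Kr + 1)))
    rw [← hSmaxdef] at this
    linarith
  have hsrcmem : ∀ (Rm Rp : Fin n → ℝ), ‖Rm‖ ≤ Smax →
      Rp ∈ Metric.ball (0 : Fin n → ℝ) (r2 / 2) →
      ((Rm, Rp) : (Fin n → ℝ) × (Fin n → ℝ)) ∈ Psi.source := by
    intro Rm Rp h hRp
    apply hr2sub
    rw [Metric.mem_ball, dist_zero_right, Prod.norm_def]
    apply max_lt
    · exact lt_of_le_of_lt h hSr2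
    · rw [Metric.mem_ball, dist_zero_right] at hRp
      linarith
  have huniq : ∀ (Rm Rp : Fin n → ℝ), ‖Rm‖ ≤ Smax →
      Rp ∈ Metric.ball (0 : Fin n → ℝ) (r2 / 2) → F Rm Rp = 0 →
      Rp = (Psi.symm ((Rm, 0) : (Fin n → ℝ) × (Fin n → ℝ))).2 := by
    intro Rm Rp h hRp hFz
    have h1 := Psi.left_inv (hsrcmem Rm Rp h hRp)
    rw [hPsicoe] at h1
    have hPhiz : Phi ((Rm, Rp) : (Fin n → ℝ) × (Fin n → ℝ))
        = ((Rm, 0) : (Fin n → ℝ) × (Fin n → ℝ)) := by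
      show ((Rm, F Rm Rp) : (Fin n → ℝ) × (Fin n → ℝ)) = (Rm, 0)
      rw [hFz]
    rw [hPhiz] at h1
    exact (congrArg Prod.snd h1).symm
  refine ⟨Smax, hSpos, Metric.ball 0 (r2 / 2), Metric.isOpen_ball,
    Metric.mem_ball_self (by positivity), Kr + 1, by positivity,
    fun Rm => (Psi.symm ((Rm, 0) : (Fin n → ℝ) × (Fin n → ℝ))).2, ?_, ?_, ?_⟩
  · refine continuous_snd.comp_continuousOn ?_
    refine Psi.continuousOn_symm.comp ((continuous_id.prodMk continuous_const).continuousOn) ?_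
    intro Rm hRm
    exact (hmem1 Rm hRm).2
  · intro Rm hRm
    refine ⟨?_, (hsolve Rm hRm).2, ?_⟩
    · rw [Metric.mem_ball, dist_zero_right]
      have h1 : ‖(Psi.symm ((Rm, 0) : (Fin n → ℝ) × (Fin n → ℝ))).2‖
          ≤ ‖Psi.symm ((Rm, 0) : (Fin n → ℝ) × (Fin n → ℝ))‖ := norm_snd_le _
      have h2 := hbound Rm hRm
      have h3 : Kr * ‖Rm‖ ≤ Kr * Smax := mul_le_mul_of_nonneg_left hRm hKr
      linarith
    · have h1 : ‖(Psi.symm ((Rm, 0) : (Fin n → ℝ) × (Fin n → ℝ))).2‖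
          ≤ ‖Psi.symm ((Rm, 0) : (Fin n → ℝ) × (Fin n → ℝ))‖ := norm_snd_le _
      have h2 := hbound Rm hRm
      have h4 : Kr * ‖Rm‖ ≤ (Kr + 1) * ‖Rm‖ :=
        mul_le_mul_of_nonneg_right (by linarith) (norm_nonneg Rm)
      linarith
  · intro g _ hgsol Rm hRm
    obtain ⟨hgW, hgF⟩ := hgsol Rm hRm
    exact huniq Rm (g Rm) hRm hgW hgF
end

section
/- Invertibility of the mass-flow boundary condition in Riemann invariants (Lemma 3.2): Let P : (0,∞) → ℝ be three times continuously differentiable with P'' > 0, fix ρ_ref > 0 and set p'(ρ) := ρP''(ρ), c := √(p'(ρ_ref)), P̃(ρ) := ∫_{ρ_ref}^ρ √(p'(s))/(c s) ds with inverse P̃⁻¹, and suppose 0 < C̲_{p'} ≤ p'(ρ) on the relevant density range with lower density bound ρ̲ > 0. Then there exists S_max > 0 such that: for every boundary value m_b with P̃⁻¹(−S_max/8)·(−cS_max/8) ≤ m_b ≤ P̃⁻¹(S_max/8)·(cS_max/8) and every R₋ with |R₋| ≤ S_max, there exists a unique R₊ with |R₊| ≤ ¼S_max + 3|R₋| satisfying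 P̃⁻¹(½(R₊ + R₋))·(c/2)(R₊ − R₋) = m_b. Moreover, for fixed R₋ with |R₋| ≤ S_max and two admissible boundary values m_b, m̃_b, the corresponding outgoing invariants satisfy |R₊(m_b) − R₊(m̃_b)| ≤ C_b |m_b − m̃_b| with a constant 0 < C_b ≤ 4/(c ρ̲). -/
open Set

set_option maxHeartbeats 1000000

/-- Invertibility of the mass-flow boundary condition in Riemann invariants (Lemma 3.2):
with `p'(ρ) = ρP''(ρ)`, `c = √(p'(ρ_ref))`, `P̃(ρ) = ∫_{ρ_ref}^ρ √(p'(s))/(cs) ds` and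
local inverse `P̃⁻¹`, there exists `S_max > 0` such that for every boundary value `m_b`
with `P̃⁻¹(−S_max/8)(−cS_max/8) ≤ m_b ≤ P̃⁻¹(S_max/8)(cS_max/8)` and every `|R₋| ≤ S_max`
there is a unique `R₊` with `|R₊| ≤ ¼S_max + 3|R₋|` and
`P̃⁻¹(½(R₊+R₋))(c/2)(R₊−R₋) = m_b`; moreover `R₊` depends Lipschitz continuously on the
boundary datum with constant `C_b ∈ (0, 4/(cρ̲)]`. -/
theorem stmt_10
    (P P' P'' P''' : ℝ → ℝ)
    (hP' : ∀ r : ℝ, 0 < r → HasDerivAt P (P' r) r)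
    (hP'' : ∀ r : ℝ, 0 < r → HasDerivAt P' (P'' r) r)
    (hP''' : ∀ r : ℝ, 0 < r → HasDerivAt P'' (P''' r) r)
    (hP'''cont : ContinuousOn P''' (Ioi (0:ℝ)))
    (hconv : ∀ r : ℝ, 0 < r → 0 < P'' r)
    (rref : ℝ) (hrref : 0 < rref)
    (c : ℝ) (hc : c = Real.sqrt (rref * P'' rref))
    (Pt : ℝ → ℝ) (hPt : ∀ r : ℝ, Pt r = ∫ s in rref..r, Real.sqrt (s * P'' s) / (c * s))
    (Pinv : ℝ → ℝ) (ε : ℝ) (hε : 0 < ε)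
    (hPinv : ∀ y : ℝ, |y| ≤ ε → 0 < Pinv y ∧ Pt (Pinv y) = y)
    (rl Cpl : ℝ) (hrl : 0 < rl) (hCpl : 0 < Cpl)
    -- lower bounds for the density and the pressure-law derivative on the relevant range
    (hlow : ∀ y : ℝ, |y| ≤ ε → rl ≤ Pinv y ∧ Cpl ≤ Pinv y * P'' (Pinv y)) :
    ∃ Smax : ℝ, 0 < Smax ∧
      ∃ Cb : ℝ, 0 < Cb ∧ Cb ≤ 4 / (c * rl) ∧
        (∀ mb Rm : ℝ,
          Pinv (-(Smax / 8)) * (-(c * Smax / 8)) ≤ mb →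
          mb ≤ Pinv (Smax / 8) * (c * Smax / 8) →
          |Rm| ≤ Smax →
          ∃! Rp : ℝ, |Rp| ≤ Smax / 4 + 3 * |Rm| ∧
            Pinv ((Rp + Rm) / 2) * (c / 2) * (Rp - Rm) = mb) ∧
        ∀ Rm mb mb' Rp Rp' : ℝ, |Rm| ≤ Smax →
          Pinv (-(Smax / 8)) * (-(c * Smax / 8)) ≤ mb →
          mb ≤ Pinv (Smax / 8) * (c * Smax / 8) →
          Pinv (-(Smax / 8)) * (-(c * Smax / 8)) ≤ mb' →
          mb' ≤ Pinv (Smax / 8) * (c * Smax / 8) →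
          |Rp| ≤ Smax / 4 + 3 * |Rm| →
          Pinv ((Rp + Rm) / 2) * (c / 2) * (Rp - Rm) = mb →
          |Rp'| ≤ Smax / 4 + 3 * |Rm| →
          Pinv ((Rp' + Rm) / 2) * (c / 2) * (Rp' - Rm) = mb' →
          |Rp - Rp'| ≤ Cb * |mb - mb'| := by
  have hc0 : 0 < c := by
    rw [hc]; exact Real.sqrt_pos.mpr (mul_pos hrref (hconv rref hrref))
  set g : ℝ → ℝ := fun s => Real.sqrt (s * P'' s) / (c * s) with hgdef
  have hPt' : ∀ r : ℝ, Pt r = ∫ s in rref..r, g s := hPt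
  have hP''cont : ContinuousOn P'' (Ioi (0:ℝ)) := fun r hr =>
    ((hP''' r hr).continuousAt).continuousWithinAt
  have hgcont : ContinuousOn g (Ioi 0) := by
    apply ContinuousOn.div
    · exact (continuousOn_id.mul hP''cont).sqrt
    · exact continuousOn_const.mul continuousOn_id
    · intro s hs; exact ne_of_gt (mul_pos hc0 hs)
  have hgpos : ∀ s : ℝ, 0 < s → 0 < g s := fun s hs =>
    div_pos (Real.sqrt_pos.mpr (mul_pos hs (hconv s hs))) (mul_pos hc0 hs)
  have hgint : ∀ a b : ℝ, 0 < a → 0 < b → IntervalIntegrable g MeasureTheory.volume a b := by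
    intro a b ha hb
    apply ContinuousOn.intervalIntegrable
    apply hgcont.mono
    intro x hx
    rcases le_total a b with h|h
    · rw [uIcc_of_le h] at hx; exact lt_of_lt_of_le ha hx.1
    · rw [uIcc_of_ge h] at hx; exact lt_of_lt_of_le hb hx.1
  have hPtdiff : ∀ a b : ℝ, 0 < a → 0 < b → Pt b - Pt a = ∫ s in a..b, g s := by
    intro a b ha hb
    rw [hPt' a, hPt' b]
    have := intervalIntegral.integral_add_adjacent_intervals
      (hgint rref a hrref ha) (hgint a b ha hb)
    linarith
  have hPtlt : ∀ a b : ℝ, 0 < a → a < b → Pt a < Pt b := by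
    intro a b ha hab
    have hb : 0 < b := ha.trans hab
    have h := intervalIntegral.intervalIntegral_pos_of_pos_on (hgint a b ha hb)
      (fun x hx => hgpos x (ha.trans hx.1)) hab
    have := hPtdiff a b ha hb
    linarith
  have hPtle : ∀ a b : ℝ, 0 < a → a ≤ b → Pt a ≤ Pt b := by
    intro a b ha hab
    rcases eq_or_lt_of_le hab with rfl|h
    · exact le_rfl
    · exact (hPtlt a b ha h).le
  have hPtinj : ∀ a b : ℝ, 0 < a → 0 < b → Pt a = Pt b → a = b := by
    intro a b ha hb h
    rcases lt_trichotomy a b with h'|h'|h'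
    · exact absurd h (ne_of_lt (hPtlt a b ha h'))
    · exact h'
    · exact absurd h.symm (ne_of_lt (hPtlt b a hb h'))
  -- monotonicity of Pinv
  have hmono : ∀ y1 y2 : ℝ, -ε ≤ y1 → y1 ≤ y2 → y2 ≤ ε → Pinv y1 ≤ Pinv y2 := by
    intro y1 y2 h1 h12 h2
    have hy1 : |y1| ≤ ε := abs_le.mpr ⟨h1, h12.trans h2⟩
    have hy2 : |y2| ≤ ε := abs_le.mpr ⟨le_trans h1 h12, h2⟩
    obtain ⟨p1, q1⟩ := hPinv y1 hy1
    obtain ⟨p2, q2⟩ := hPinv y2 hy2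
    by_contra h
    push_neg at h
    have := hPtlt _ _ p2 h
    rw [q1, q2] at this; linarith
  obtain ⟨hR0, hRPt⟩ := hPinv ε (by rw [abs_of_pos hε])
  set R := Pinv ε with hRdef
  set L := c * R / Real.sqrt Cpl with hLdef
  have hsC : 0 < Real.sqrt Cpl := Real.sqrt_pos.mpr hCpl
  have hL0 : 0 < L := div_pos (mul_pos hc0 hR0) hsC
  -- Lipschitz estimate for Pinv
  have hlip : ∀ y1 y2 : ℝ, -ε ≤ y1 → y1 ≤ y2 → y2 ≤ ε →
      Pinv y2 - Pinv y1 ≤ L * (y2 - y1) := by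
    intro y1 y2 h1 h12 h2
    have hy1 : |y1| ≤ ε := abs_le.mpr ⟨h1, h12.trans h2⟩
    have hy2 : |y2| ≤ ε := abs_le.mpr ⟨le_trans h1 h12, h2⟩
    obtain ⟨p1, q1⟩ := hPinv y1 hy1
    obtain ⟨p2, q2⟩ := hPinv y2 hy2
    have hr12 : Pinv y1 ≤ Pinv y2 := hmono y1 y2 h1 h12 h2
    have hr2R : Pinv y2 ≤ R := hmono y2 ε (le_trans h1 h12) h2 le_rfl
    have hbound : ∀ s ∈ Icc (Pinv y1) (Pinv y2), Real.sqrt Cpl / (c * R) ≤ g s := by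
      intro s hs
      have hs0 : 0 < s := lt_of_lt_of_le p1 hs.1
      have hPts1 : y1 ≤ Pt s := by rw [← q1]; exact hPtle _ _ p1 hs.1
      have hPts2 : Pt s ≤ y2 := by rw [← q2]; exact hPtle _ _ hs0 hs.2
      have habs : |Pt s| ≤ ε := abs_le.mpr ⟨h1.trans hPts1, hPts2.trans h2⟩
      obtain ⟨ps, qs⟩ := hPinv (Pt s) habs
      have hseq : Pinv (Pt s) = s := hPtinj _ _ ps hs0 qs
      have hCs : Cpl ≤ s * P'' s := by
        have := (hlow (Pt s) habs).2
        rwa [hseq] at this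
      have hsR : s ≤ R := hs.2.trans hr2R
      have hnum : Real.sqrt Cpl ≤ Real.sqrt (s * P'' s) := Real.sqrt_le_sqrt hCs
      have hden : c * s ≤ c * R := by nlinarith
      exact div_le_div₀ (Real.sqrt_nonneg _) hnum (mul_pos hc0 hs0) hden
    have hint : Real.sqrt Cpl / (c * R) * (Pinv y2 - Pinv y1) ≤ y2 - y1 := by
      have h1' := intervalIntegral.integral_mono_on hr12 intervalIntegrable_const
        (hgint _ _ p1 p2) hbound
      rw [intervalIntegral.integral_const, smul_eq_mul] at h1'
      have hd := hPtdiff _ _ p1 p2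
      rw [q1, q2] at hd
      nlinarith [h1', hd]
    have hm0 : 0 < Real.sqrt Cpl / (c * R) := div_pos hsC (mul_pos hc0 hR0)
    have h3 : Pinv y2 - Pinv y1 ≤ (y2 - y1) / (Real.sqrt Cpl / (c * R)) := by
      rw [le_div_iff₀ hm0]; nlinarith [hint]
    have h4 : (y2 - y1) / (Real.sqrt Cpl / (c * R)) = L * (y2 - y1) := by
      rw [hLdef]; field_simp
    linarith [h3, h4.le, h4.ge]
  clear_value R
  -- choice of Smax
  obtain ⟨Smax, hS0, hS1, hS2⟩ : ∃ S : ℝ, 0 < S ∧ 17 * S / 8 ≤ ε ∧ 17 * (L * S) ≤ 4 * rl := by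
    refine ⟨min (8 * ε / 17) (4 * rl / (17 * L)), lt_min (by positivity) (by positivity), ?_, ?_⟩
    · have := min_le_left (8 * ε / 17) (4 * rl / (17 * L))
      linarith
    · have h := min_le_right (8 * ε / 17) (4 * rl / (17 * L))
      rw [le_div_iff₀ (by positivity : (0:ℝ) < 17 * L)] at h
      nlinarith
  clear_value L
  -- arguments stay in range
  have hrange : ∀ Rm Rp : ℝ, |Rm| ≤ Smax → |Rp| ≤ Smax / 4 + 3 * |Rm| →
      |(Rp + Rm) / 2| ≤ ε := by
    intro Rm Rp hRm hRp
    have h1 : |(Rp + Rm) / 2| ≤ 17 * Smax / 8 := by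
      rw [abs_div, abs_two]
      have := abs_add_le Rp Rm
      linarith
    linarith
  -- strict monotonicity estimate for the flux map
  have hkey : ∀ Rm Rp1 Rp2 : ℝ, |Rm| ≤ Smax → |Rp1| ≤ Smax / 4 + 3 * |Rm| →
      |Rp2| ≤ Smax / 4 + 3 * |Rm| → Rp1 ≤ Rp2 →
      c * rl / 4 * (Rp2 - Rp1) ≤
        Pinv ((Rp2 + Rm) / 2) * (c / 2) * (Rp2 - Rm)
          - Pinv ((Rp1 + Rm) / 2) * (c / 2) * (Rp1 - Rm) := by
    intro Rm Rp1 Rp2 hRm h1 h2 h12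
    have he1 : |(Rp1 + Rm) / 2| ≤ ε := hrange Rm Rp1 hRm h1
    have he2 : |(Rp2 + Rm) / 2| ≤ ε := hrange Rm Rp2 hRm h2
    have ha12 : (Rp1 + Rm) / 2 ≤ (Rp2 + Rm) / 2 := by linarith
    have hm := hmono _ _ (neg_le_of_abs_le he1) ha12 (le_of_abs_le he2)
    have hl := hlip _ _ (neg_le_of_abs_le he1) ha12 (le_of_abs_le he2)
    have hdlt : (Rp2 + Rm) / 2 - (Rp1 + Rm) / 2 = (Rp2 - Rp1) / 2 := by ring
    rw [hdlt] at hl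
    have hrl2 : rl ≤ Pinv ((Rp2 + Rm) / 2) := (hlow _ he2).1
    have hRm1 : |Rp1 - Rm| ≤ 17 * Smax / 4 := by
      have := abs_sub Rp1 Rm
      have h3 : |Rm| ≤ Smax := hRm
      calc |Rp1 - Rm| ≤ |Rp1| + |Rm| := abs_sub Rp1 Rm
        _ ≤ 17 * Smax / 4 := by linarith
    obtain ⟨hRm1a, hRm1b⟩ := abs_le.mp hRm1
    set δ := Pinv ((Rp2 + Rm) / 2) - Pinv ((Rp1 + Rm) / 2) with hδ
    have hδ0 : 0 ≤ δ := by simp [hδ]; linarith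
    have hd0 : 0 ≤ Rp2 - Rp1 := by linarith
    have hbr : rl * (Rp2 - Rp1) / 2 ≤
        Pinv ((Rp2 + Rm) / 2) * (Rp2 - Rp1) + δ * (Rp1 - Rm) := by
      have hA := mul_le_mul_of_nonneg_left hRm1a hδ0
      have hB := mul_le_mul_of_nonneg_right hl (by positivity : (0:ℝ) ≤ 17 * Smax / 4)
      have hC := mul_le_mul_of_nonneg_right hS2 hd0
      have hD := mul_le_mul_of_nonneg_right hrl2 hd0
      linarith [hA, hB, hC, hD]
    have hrw : Pinv ((Rp2 + Rm) / 2) * (c / 2) * (Rp2 - Rm)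
        - Pinv ((Rp1 + Rm) / 2) * (c / 2) * (Rp1 - Rm)
        = (c / 2) * (Pinv ((Rp2 + Rm) / 2) * (Rp2 - Rp1) + δ * (Rp1 - Rm)) := by
      rw [hδ]; ring
    rw [hrw]
    calc c * rl / 4 * (Rp2 - Rp1) = (c / 2) * (rl * (Rp2 - Rp1) / 2) := by ring
      _ ≤ (c / 2) * (Pinv ((Rp2 + Rm) / 2) * (Rp2 - Rp1) + δ * (Rp1 - Rm)) :=
          mul_le_mul_of_nonneg_left hbr (by positivity)
  -- continuity of Pinv on [-eps,eps]
  have hPinvCont : ContinuousOn Pinv (Icc (-ε) ε) := by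
    apply LipschitzOnWith.continuousOn (K := Real.toNNReal L)
    apply LipschitzOnWith.of_dist_le_mul
    intro x hx y hy
    rw [Real.dist_eq, Real.dist_eq, Real.coe_toNNReal _ hL0.le]
    rcases le_total x y with h|h
    · rw [abs_sub_comm x y, abs_of_nonneg (sub_nonneg.mpr h), abs_sub_comm (Pinv x) (Pinv y),
        abs_of_nonneg (sub_nonneg.mpr (hmono x y hx.1 h hy.2))]
      exact hlip x y hx.1 h hy.2
    · rw [abs_of_nonneg (sub_nonneg.mpr h),
        abs_of_nonneg (sub_nonneg.mpr (hmono y x hy.1 h hx.2))]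
      exact hlip y x hy.1 h hx.2
  -- existence
  have hexist : ∀ mb Rm : ℝ, Pinv (-(Smax / 8)) * (-(c * Smax / 8)) ≤ mb →
      mb ≤ Pinv (Smax / 8) * (c * Smax / 8) → |Rm| ≤ Smax →
      ∃ Rp : ℝ, |Rp| ≤ Smax / 4 + 3 * |Rm| ∧
        Pinv ((Rp + Rm) / 2) * (c / 2) * (Rp - Rm) = mb := by
    intro mb Rm hmb1 hmb2 hRm
    have hRm0 : 0 ≤ |Rm| := abs_nonneg Rm
    have hRmle : Rm ≤ |Rm| := le_abs_self Rm
    have hRmge : -|Rm| ≤ Rm := neg_abs_le Rm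
    set U : ℝ := Smax / 4 + 3 * |Rm| with hU
    set Lo : ℝ := Rm - (Smax / 4 + 2 * |Rm|) with hLo
    have hLoU : Lo ≤ U := by rw [hU, hLo]; linarith
    have hLoabs : -U ≤ Lo := by rw [hU, hLo]; linarith
    have hUabs : |U| ≤ Smax / 4 + 3 * |Rm| := by
      rw [hU, abs_of_nonneg (by positivity)]
    have hLoabs' : |Lo| ≤ Smax / 4 + 3 * |Rm| := by
      rw [← hU]; exact abs_le.mpr ⟨hLoabs, hLoU⟩
    have hFcont : ContinuousOn (fun x => Pinv ((x + Rm) / 2) * (c / 2) * (x - Rm))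
        (Icc Lo U) := by
      apply ContinuousOn.mul
      · apply ContinuousOn.mul
        · have hf : Continuous (fun x : ℝ => (x + Rm) / 2) :=
            (continuous_id.add continuous_const).div_const 2
          apply ContinuousOn.comp hPinvCont hf.continuousOn
          intro x hx
          have hxabs : |x| ≤ Smax / 4 + 3 * |Rm| := by
            rw [← hU]; exact abs_le.mpr ⟨hLoabs.trans hx.1, hx.2⟩
          exact Set.mem_Icc.mpr (abs_le.mp (hrange Rm x hRm hxabs))
        · exact continuousOn_const
      · exact (continuous_id.sub continuous_const).continuousOn
    have hS8 : |Smax / 8| ≤ ε := by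
      rw [abs_of_pos (by positivity)]; linarith
    have hS8' : |(-(Smax / 8))| ≤ ε := by
      rw [abs_neg, abs_of_pos (by positivity)]; linarith
    have hargU : |(U + Rm) / 2| ≤ ε := hrange Rm U hRm hUabs
    have hargLo : |(Lo + Rm) / 2| ≤ ε := hrange Rm Lo hRm hLoabs'
    have hFU : mb ≤ Pinv ((U + Rm) / 2) * (c / 2) * (U - Rm) := by
      have hPa : Pinv (Smax / 8) ≤ Pinv ((U + Rm) / 2) := by
        apply hmono
        · have : (0:ℝ) < Smax / 8 := by positivity
          linarith
        · rw [hU]; linarith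
        · exact le_of_abs_le hargU
      have hb : Smax / 4 ≤ U - Rm := by rw [hU]; linarith
      have hA0 : 0 ≤ Pinv ((U + Rm) / 2) := (hPinv _ hargU).1.le
      calc mb ≤ Pinv (Smax / 8) * (c * Smax / 8) := hmb2
        _ = Pinv (Smax / 8) * ((c / 2) * (Smax / 4)) := by ring
        _ ≤ Pinv ((U + Rm) / 2) * ((c / 2) * (U - Rm)) := by
            exact mul_le_mul hPa (mul_le_mul_of_nonneg_left hb (by positivity)) (by positivity) hA0
        _ = Pinv ((U + Rm) / 2) * (c / 2) * (U - Rm) := by ring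
    have hFLo : Pinv ((Lo + Rm) / 2) * (c / 2) * (Lo - Rm) ≤ mb := by
      have harglo_le : (Lo + Rm) / 2 ≤ -(Smax / 8) := by rw [hLo]; linarith
      have hPa : Pinv ((Lo + Rm) / 2) ≤ Pinv (-(Smax / 8)) :=
        hmono _ _ (neg_le_of_abs_le hargLo) harglo_le (by linarith)
      have hPl := hlip _ _ (neg_le_of_abs_le hargLo) harglo_le
        (by linarith)
      have hdiff : -(Smax / 8) - (Lo + Rm) / 2 = |Rm| - Rm := by rw [hLo]; ring
      rw [hdiff] at hPl
      have hra : rl ≤ Pinv ((Lo + Rm) / 2) := (hlow _ hargLo).1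
      have hbr : Pinv (-(Smax / 8)) * (Smax / 4) ≤
          Pinv ((Lo + Rm) / 2) * (Smax / 4 + 2 * |Rm|) := by
        have h1 : Pinv (-(Smax / 8)) - Pinv ((Lo + Rm) / 2) ≤ L * (2 * |Rm|) := by
          have := mul_le_mul_of_nonneg_left (show |Rm| - Rm ≤ 2 * |Rm| by linarith) hL0.le
          linarith
        have h2 := mul_le_mul_of_nonneg_right h1 hS0.le
        have h3 := mul_le_mul_of_nonneg_right hS2 hRm0
        have h4 := mul_le_mul_of_nonneg_right hra hRm0
        have h5 : 0 ≤ rl * |Rm| := mul_nonneg hrl.le hRm0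
        nlinarith [h2, h3, h4, h5]
      calc Pinv ((Lo + Rm) / 2) * (c / 2) * (Lo - Rm)
          = -((c / 2) * (Pinv ((Lo + Rm) / 2) * (Smax / 4 + 2 * |Rm|))) := by rw [hLo]; ring
        _ ≤ -((c / 2) * (Pinv (-(Smax / 8)) * (Smax / 4))) := by
            apply neg_le_neg; exact mul_le_mul_of_nonneg_left hbr (by positivity)
        _ = Pinv (-(Smax / 8)) * (-(c * Smax / 8)) := by ring
        _ ≤ mb := hmb1
    obtain ⟨Rp, hRpmem, hRpeq⟩ := intermediate_value_Icc hLoU hFcont ⟨hFLo, hFU⟩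
    exact ⟨Rp, abs_le.mpr ⟨hLoabs.trans hRpmem.1, hRpmem.2⟩, hRpeq⟩
  -- Lipschitz dependence
  have hlipF : ∀ Rm Rp Rp' mb mb' : ℝ, |Rm| ≤ Smax →
      |Rp| ≤ Smax / 4 + 3 * |Rm| → Pinv ((Rp + Rm) / 2) * (c / 2) * (Rp - Rm) = mb →
      |Rp'| ≤ Smax / 4 + 3 * |Rm| → Pinv ((Rp' + Rm) / 2) * (c / 2) * (Rp' - Rm) = mb' →
      |Rp - Rp'| ≤ 4 / (c * rl) * |mb - mb'| := by
    intro Rm Rp Rp' mb mb' hRm h1 e1 h2 e2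
    have hcrl : 0 < c * rl := mul_pos hc0 hrl
    have hrw : 4 / (c * rl) * |mb - mb'| = 4 * |mb - mb'| / (c * rl) := by ring
    rcases le_total Rp' Rp with h|h
    · have hk := hkey Rm Rp' Rp hRm h2 h1 h
      rw [e1, e2] at hk
      rw [abs_of_nonneg (sub_nonneg.mpr h), hrw, le_div_iff₀ hcrl]
      have h5 := le_abs_self (mb - mb')
      nlinarith [hk, h5]
    · have hk := hkey Rm Rp Rp' hRm h1 h2 h
      rw [e1, e2] at hk
      rw [abs_sub_comm, abs_of_nonneg (sub_nonneg.mpr h), hrw, le_div_iff₀ hcrl]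
      have h5 : mb' - mb ≤ |mb - mb'| := by rw [abs_sub_comm]; exact le_abs_self _
      nlinarith [hk, h5]
  -- assembly
  refine ⟨Smax, hS0, 4 / (c * rl), by positivity, le_rfl, ?_, ?_⟩
  · intro mb Rm hmb1 hmb2 hRm
    obtain ⟨Rp, hb, he⟩ := hexist mb Rm hmb1 hmb2 hRm
    refine ⟨Rp, ⟨hb, he⟩, ?_⟩
    intro y hy
    have hli := hlipF Rm y Rp mb mb hRm hy.1 hy.2 hb he
    have h0 : |mb - mb| = 0 := by simp
    rw [h0, mul_zero] at hli
    have := le_antisymm hli (abs_nonneg _)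
    exact sub_eq_zero.mp (abs_eq_zero.mp this)
  · intro Rm mb mb' Rp Rp' hRm _ _ _ _ h1 e1 h2 e2
    exact hlipF Rm Rp Rp' mb mb' hRm h1 e1 h2 e2
end

section
/- Integral representation of the difference of signed squares: For all real numbers v and v̂: |v|v − |v̂|v̂ = 2(v − v̂) ∫₀¹ |v̂ + s(v − v̂)| ds, and the integral satisfies ¼(|v̂| + |v|) ≤ ∫₀¹ |v̂ + s(v − v̂)| ds ≤ ½(|v̂| + |v|). -/
lemma hasDerivAt_abs_mul_self (x : ℝ) :
    HasDerivAt (fun y : ℝ => |y| * y) (2 * |x|) x := by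
  rcases eq_or_ne x 0 with rfl | hx
  · simp only [abs_zero, mul_zero]
    rw [hasDerivAt_iff_isLittleO]
    simp only [abs_zero, mul_zero, sub_zero, zero_mul]
    rw [Asymptotics.isLittleO_iff]
    intro c hc
    filter_upwards [Metric.ball_mem_nhds (0:ℝ) hc] with y hy
    simp only [Metric.mem_ball, Real.dist_eq, sub_zero] at hy
    have : ‖|y| * y‖ = |y| * ‖y‖ := by
      simp [abs_mul, Real.norm_eq_abs, abs_abs]
    rw [smul_zero, sub_zero, this]
    exact mul_le_mul_of_nonneg_right (le_of_lt hy) (norm_nonneg _)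
  · have h : HasDerivAt (fun y : ℝ => |y| * y) ((SignType.sign x : ℝ) * x + |x| * (1:ℝ)) x :=
      (hasDerivAt_abs hx).mul (hasDerivAt_id x)
    convert h using 1
    rcases hx.lt_or_gt with h0 | h0
    · rw [abs_of_neg h0, sign_neg h0]; push_cast [SignType.coe_one]; ring
    · rw [abs_of_pos h0, sign_pos h0]; push_cast [SignType.coe_one]; ring

lemma key_ineq (a b : ℝ) (h : a ≤ b) :
    (b - a) * (|a| + |b|) / 2 ≤ |b| * b - |a| * a ∧
    |b| * b - |a| * a ≤ (b - a) * (|a| + |b|) := by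
  rcases le_or_gt 0 a with ha | ha <;> rcases le_or_gt 0 b with hb | hb
  · rw [abs_of_nonneg ha, abs_of_nonneg hb]
    constructor <;> nlinarith
  · linarith
  · rw [abs_of_neg ha, abs_of_nonneg hb]
    constructor <;> nlinarith [sq_nonneg (a + b), mul_nonpos_of_nonpos_of_nonneg ha.le hb]
  · rw [abs_of_neg ha, abs_of_neg hb]
    constructor <;> nlinarith

/-- Integral representation of the difference of signed squares: for all reals `v, v̂`,
`|v|v − |v̂|v̂ = 2(v − v̂) ∫₀¹ |v̂ + s(v − v̂)| ds`, and the integral satisfies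
`¼(|v̂| + |v|) ≤ ∫₀¹ |v̂ + s(v − v̂)| ds ≤ ½(|v̂| + |v|)`. -/
theorem stmt_14 (v vh : ℝ) :
    |v| * v - |vh| * vh = 2 * (v - vh) * (∫ s in (0:ℝ)..1, |vh + s * (v - vh)|) ∧
    (|vh| + |v|) / 4 ≤ (∫ s in (0:ℝ)..1, |vh + s * (v - vh)|) ∧
    (∫ s in (0:ℝ)..1, |vh + s * (v - vh)|) ≤ (|vh| + |v|) / 2 := by
  set d := v - vh with hd
  have hderiv : ∀ s : ℝ, HasDerivAt (fun t : ℝ => |vh + t * d| * (vh + t * d))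
      (2 * |vh + s * d| * d) s := by
    intro s
    have haff : HasDerivAt (fun t : ℝ => vh + t * d) d s := by
      simpa using ((hasDerivAt_id s).mul_const d).const_add vh
    have := (hasDerivAt_abs_mul_self (vh + s * d)).comp s haff
    simpa [Function.comp_def, mul_comm, mul_assoc, mul_left_comm] using this
  have hcont : Continuous fun s : ℝ => 2 * |vh + s * d| * d := by
    continuity
  have heq : ∫ s in (0:ℝ)..1, 2 * |vh + s * d| * d
      = |vh + 1 * d| * (vh + 1 * d) - |vh + 0 * d| * (vh + 0 * d) :=
    intervalIntegral.integral_eq_sub_of_hasDerivAt (fun s _ => hderiv s)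
      (hcont.intervalIntegrable 0 1)
  have h1 : |v| * v - |vh| * vh = 2 * d * (∫ s in (0:ℝ)..1, |vh + s * d|) := by
    have : (∫ s in (0:ℝ)..1, 2 * |vh + s * d| * d)
        = 2 * d * ∫ s in (0:ℝ)..1, |vh + s * d| := by
      rw [← intervalIntegral.integral_const_mul]
      congr 1; ext s; ring
    rw [this] at heq
    rw [heq]
    have e1 : vh + 1 * d = v := by rw [hd]; ring
    have e0 : vh + 0 * d = vh := by ring
    rw [e1, e0]
  refine ⟨h1, ?_, ?_⟩
  · rcases lt_trichotomy d 0 with hdlt | hdeq | hdgt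
    · have hle : v ≤ vh := by linarith [hd ▸ hdlt]
      have hk := (key_ineq v vh hle).1
      have h2d : (0:ℝ) < 2 * (vh - v) := by linarith
      rw [← mul_le_mul_iff_right₀ h2d]
      have : 2 * (vh - v) * (∫ s in (0:ℝ)..1, |vh + s * d|)
          = |vh| * vh - |v| * v := by rw [hd] at h1 ⊢; linarith [h1]
      rw [this]
      nlinarith [hk]
    · have : v = vh := by rw [hd] at hdeq; linarith
      subst this
      simp [hdeq]
      have : (∫ s in (0:ℝ)..1, |v|) = |v| := by simp
      nlinarith [abs_nonneg v, this]
    · have hle : vh ≤ v := by rw [hd] at hdgt; linarith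
      have hk := (key_ineq vh v hle).1
      have h2d : (0:ℝ) < 2 * d := by linarith
      rw [← mul_le_mul_iff_right₀ h2d]
      rw [← h1]
      rw [hd]
      nlinarith [hk]
  · rcases lt_trichotomy d 0 with hdlt | hdeq | hdgt
    · have hle : v ≤ vh := by rw [hd] at hdlt; linarith
      have hk := (key_ineq v vh hle).2
      have h2d : (0:ℝ) < 2 * (vh - v) := by linarith
      rw [← mul_le_mul_iff_right₀ h2d]
      have : 2 * (vh - v) * (∫ s in (0:ℝ)..1, |vh + s * d|)
          = |vh| * vh - |v| * v := by rw [hd] at h1 ⊢; linarith [h1]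
      rw [this]
      nlinarith [hk]
    · have : v = vh := by rw [hd] at hdeq; linarith
      subst this
      have : (∫ s in (0:ℝ)..1, |v + s * d|) = |v| := by
        simp [hdeq]
      rw [this]
      nlinarith [abs_nonneg v]
    · have hle : vh ≤ v := by rw [hd] at hdgt; linarith
      have hk := (key_ineq vh v hle).2
      have h2d : (0:ℝ) < 2 * d := by linarith
      rw [← mul_le_mul_iff_right₀ h2d]
      rw [← h1, hd]
      nlinarith [hk]
end

section
/- Observer-term estimate for density measurements: Let P be three times continuously differentiable on [ρ̲, ρ̄] (0 < ρ̲ < ρ̄) with 0 < C̲_{P''} ≤ P'' ≤ C̄_{P''} there, set p'(ρ) = ρP''(ρ) with 0 < C̲_{p'} ≤ p' ≤ C̄_{p'} on [ρ̲, ρ̄], fix ρ_ref ∈ [ρ̲, ρ̄], c = √(p'(ρ_ref)), P̃(ρ) = ∫_{ρ_ref}^ρ √(p'(s))/(c s) ds, and let μ > 0, v̄ > 0, ℓ > 0. For all measurable ρ, ρ̂, v, v̂ on (0,ℓ) with ρ̲ ≤ ρ, ρ̂ ≤ ρ̄ and |v|, |v̂| ≤ v̄ a.e.: −∫₀^ℓ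 μ (c/√(p'(ρ̂))) ρ̂ (P̃(ρ) − P̃(ρ̂)) · (½(v² − v̂²) + P'(ρ) − P'(ρ̂)) dx ≤ −½ μ (ρ̲/ρ̄) C̲_{P''} √(C̲_{p'}/C̄_{p'}) ∫₀^ℓ (ρ − ρ̂)² dx + ½ μ (ρ̄/ρ̲)³ (v̄²/C̲_{P''}) (C̄_{p'}/C̲_{p'})^{3/2} ∫₀^ℓ (v − v̂)² dx. -/
open MeasureTheory Set

set_option maxHeartbeats 1000000

open MeasureTheory Set

lemma obs_sandwich {rl ru : ℝ} {g : ℝ → ℝ} (hg : ContinuousOn g (Icc rl ru))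
    {m M : ℝ} (hgb : ∀ s ∈ Icc rl ru, m ≤ g s ∧ g s ≤ M)
    {a b : ℝ} (ha : a ∈ Icc rl ru) (hb : b ∈ Icc rl ru) (hab : a ≤ b) :
    m * (b - a) ≤ (∫ s in a..b, g s) ∧ (∫ s in a..b, g s) ≤ M * (b - a) := by
  have hsub : Icc a b ⊆ Icc rl ru := Icc_subset_Icc ha.1 hb.2
  have hint : IntervalIntegrable g volume a b :=
    (hg.mono (by rw [uIcc_of_le hab]; exact hsub)).intervalIntegrable
  constructor
  · have := intervalIntegral.integral_mono_on hab (intervalIntegrable_const (c := m)) hint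
      (fun s hs => (hgb s (hsub hs)).1)
    simpa [intervalIntegral.integral_const, smul_eq_mul, mul_comm] using this
  · have := intervalIntegral.integral_mono_on hab hint (intervalIntegrable_const (c := M))
      (fun s hs => (hgb s (hsub hs)).2)
    simpa [intervalIntegral.integral_const, smul_eq_mul, mul_comm] using this

lemma obs_prod_lower {m1 m2 d T S : ℝ} (hm1 : 0 ≤ m1) (hm2 : 0 ≤ m2)
    (h1 : 0 ≤ d → m1 * d ≤ T) (h2 : d ≤ 0 → T ≤ m1 * d)
    (h3 : 0 ≤ d → m2 * d ≤ S) (h4 : d ≤ 0 → S ≤ m2 * d) :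
    m1 * m2 * d ^ 2 ≤ T * S := by
  rcases le_total 0 d with h | h
  · have e1 := h1 h; have e3 := h3 h
    nlinarith [mul_le_mul e1 e3 (mul_nonneg hm2 h) ((mul_nonneg hm1 h).trans e1)]
  · have e2 := h2 h; have e4 := h4 h
    have hS0 : S ≤ 0 := e4.trans (by nlinarith)
    have hmd : m1 * d ≤ 0 := by nlinarith
    have t1 : m1 * d * S ≤ T * S := mul_le_mul_of_nonpos_right e2 hS0
    have t2 : m1 * d * (m2 * d) ≤ m1 * d * S := mul_le_mul_of_nonpos_left e4 hmd
    nlinarith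

lemma obs_key (μ c rl ru vb Cpl Cpu CP2l : ℝ) (hμ : 0 < μ) (hrl : 0 < rl) (hlu : rl < ru)
    (hvb : 0 < vb) (hCpl : 0 < Cpl) (hplu : Cpl ≤ Cpu) (hCP2l : 0 < CP2l)
    (hc0 : 0 < c)
    (Q T S a ah w wh : ℝ)
    (hQl : Real.sqrt Cpl ≤ Q) (hQu : Q ≤ Real.sqrt Cpu)
    (hTS : Real.sqrt Cpl / (c * ru) * CP2l * (a - ah) ^ 2 ≤ T * S)
    (hT2 : |T| ≤ Real.sqrt Cpu / (c * rl) * |a - ah|)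
    (ha : a ∈ Icc rl ru) (hah : ah ∈ Icc rl ru) (hw : |w| ≤ vb) (hwh : |wh| ≤ vb) :
    -(μ * (c / Q) * ah * T * ((w ^ 2 - wh ^ 2) / 2 + S)) ≤
      -(μ / 2 * (rl / ru) * CP2l * Real.sqrt (Cpl / Cpu)) * (a - ah) ^ 2 +
        μ / 2 * (ru / rl) ^ 3 * (vb ^ 2 / CP2l) * Real.sqrt (Cpu / Cpl) ^ 3 * (w - wh) ^ 2 := by
  have hru : 0 < ru := hrl.trans hlu
  obtain ⟨sl, hsl_def⟩ : ∃ x, Real.sqrt Cpl = x := ⟨_, rfl⟩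
  obtain ⟨su, hsu_def⟩ : ∃ x, Real.sqrt Cpu = x := ⟨_, rfl⟩
  have hsl0 : 0 < sl := hsl_def ▸ Real.sqrt_pos.2 hCpl
  have hsu0 : 0 < su := hsu_def ▸ Real.sqrt_pos.2 (hCpl.trans_le hplu)
  have hslu : sl ≤ su := hsl_def ▸ hsu_def ▸ Real.sqrt_le_sqrt hplu
  have hQ0 : 0 < Q := hsl0.trans_le (hsl_def ▸ hQl)
  have hsq1 : Real.sqrt (Cpl / Cpu) = sl / su := by
    rw [Real.sqrt_div hCpl.le, hsl_def, hsu_def]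
  have hsq2 : Real.sqrt (Cpu / Cpl) = su / sl := by
    rw [Real.sqrt_div (hCpl.le.trans hplu), hsl_def, hsu_def]
  rw [hsl_def] at hQl hTS
  rw [hsu_def] at hQu hT2
  rw [hsq1, hsq2]
  clear hsl_def hsu_def hsq1 hsq2
  obtain ⟨K0, hK0_def⟩ : ∃ x, μ * (c / Q) * ah = x := ⟨_, rfl⟩
  rw [hK0_def]
  have hK0l : μ * c * rl / su ≤ K0 := by
    rw [← hK0_def]
    have h1 : c / su ≤ c / Q := div_le_div_of_nonneg_left hc0.le hQ0 hQu
    have h2 : μ * (c / su) * rl ≤ μ * (c / Q) * ah :=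
      mul_le_mul (mul_le_mul_of_nonneg_left h1 hμ.le) hah.1 hrl.le
        (mul_nonneg hμ.le (div_nonneg hc0.le hQ0.le))
    calc μ * c * rl / su = μ * (c / su) * rl := by ring
      _ ≤ _ := h2
  have hK0u : K0 ≤ μ * c * ru / sl := by
    rw [← hK0_def]
    have h1 : c / Q ≤ c / sl := div_le_div_of_nonneg_left hc0.le hsl0 hQl
    have h2 : μ * (c / Q) * ah ≤ μ * (c / sl) * ru :=
      mul_le_mul (mul_le_mul_of_nonneg_left h1 hμ.le) hah.2 (hrl.le.trans hah.1)
        (mul_nonneg hμ.le (div_nonneg hc0.le hsl0.le))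
    calc μ * (c / Q) * ah ≤ μ * (c / sl) * ru := h2
      _ = μ * c * ru / sl := by ring
  have hK00 : 0 < K0 :=
    lt_of_lt_of_le (div_pos (by positivity) hsu0) hK0l
  clear hK0_def
  -- main quadratic term
  have hTSnn : (0:ℝ) ≤ sl / (c * ru) * CP2l * (a - ah) ^ 2 :=
    mul_nonneg (mul_nonneg (div_nonneg hsl0.le (by positivity)) hCP2l.le) (sq_nonneg _)
  have hTS0 : 0 ≤ T * S := le_trans hTSnn hTS
  have step1 : μ * (rl / ru) * CP2l * (sl / su) * (a - ah) ^ 2 ≤ K0 * (T * S) := by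
    have h3 := mul_le_mul hK0l hTS hTSnn hK00.le
    calc μ * (rl / ru) * CP2l * (sl / su) * (a - ah) ^ 2
        = (μ * c * rl / su) * (sl / (c * ru) * CP2l * (a - ah) ^ 2) := by
          field_simp
      _ ≤ K0 * (T * S) := h3
  -- cross term
  obtain ⟨D, hD_def⟩ : ∃ x, |a - ah| = x := ⟨_, rfl⟩
  obtain ⟨E, hE_def⟩ : ∃ x, |w - wh| = x := ⟨_, rfl⟩
  have hD0 : 0 ≤ D := hD_def ▸ abs_nonneg _
  have hE0 : 0 ≤ E := hE_def ▸ abs_nonneg _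
  have hD2 : D ^ 2 = (a - ah) ^ 2 := hD_def ▸ sq_abs _
  have hE2 : E ^ 2 = (w - wh) ^ 2 := hE_def ▸ sq_abs _
  rw [hD_def] at hT2
  obtain ⟨X, hX_def⟩ : ∃ x, μ * (ru / rl) * (su / sl) * vb = x := ⟨_, rfl⟩
  have hX0 : 0 < X := hX_def ▸
    mul_pos (mul_pos (mul_pos hμ (div_pos hru hrl)) (div_pos hsu0 hsl0)) hvb
  have hcross : -(K0 * T * ((w ^ 2 - wh ^ 2) / 2)) ≤ X * D * E := by
    have h1 : -(K0 * T * ((w ^ 2 - wh ^ 2) / 2)) ≤ |K0 * T * ((w ^ 2 - wh ^ 2) / 2)| :=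
      neg_le_abs _
    have h2 : |K0 * T * ((w ^ 2 - wh ^ 2) / 2)| = K0 * |T| * |(w ^ 2 - wh ^ 2) / 2| := by
      rw [abs_mul, abs_mul, abs_of_pos hK00]
    have hw' := abs_le.1 hw
    have hwh' := abs_le.1 hwh
    have hwe : |(w ^ 2 - wh ^ 2) / 2| ≤ vb * E := by
      have he : (w ^ 2 - wh ^ 2) / 2 = (w - wh) * ((w + wh) / 2) := by ring
      rw [he, abs_mul, hE_def]
      have hs : |(w + wh) / 2| ≤ vb := by
        rw [abs_le]; constructor
        · rw [le_div_iff₀ (by norm_num : (0:ℝ) < 2)]; linarith [hw'.1, hwh'.1]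
        · rw [div_le_iff₀ (by norm_num : (0:ℝ) < 2)]; linarith [hw'.2, hwh'.2]
      calc E * |(w + wh) / 2| ≤ E * vb := mul_le_mul_of_nonneg_left hs hE0
        _ = vb * E := by ring
    have h3 : K0 * |T| * |(w ^ 2 - wh ^ 2) / 2| ≤
        (μ * c * ru / sl) * (su / (c * rl) * D) * (vb * E) := by
      apply mul_le_mul _ hwe (abs_nonneg _) _
      · exact mul_le_mul hK0u hT2 (abs_nonneg _) (div_nonneg (by positivity) hsl0.le)
      · exact mul_nonneg (div_nonneg (by positivity) hsl0.le)
          (mul_nonneg (div_nonneg hsu0.le (by positivity)) hD0)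
    have h4 : (μ * c * ru / sl) * (su / (c * rl) * D) * (vb * E) = X * D * E := by
      rw [← hX_def]; field_simp
    calc -(K0 * T * ((w ^ 2 - wh ^ 2) / 2)) ≤ K0 * |T| * |(w ^ 2 - wh ^ 2) / 2| := h1.trans_eq h2
      _ ≤ (μ * c * ru / sl) * (su / (c * rl) * D) * (vb * E) := h3
      _ = X * D * E := h4
  -- Young's inequality on the cross term
  obtain ⟨A, hA_def⟩ : ∃ x, μ / 2 * (rl / ru) * CP2l * (sl / su) = x := ⟨_, rfl⟩
  have hA0 : 0 < A := hA_def ▸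
    mul_pos (mul_pos (mul_pos (by positivity) (div_pos hrl hru)) hCP2l) (div_pos hsl0 hsu0)
  obtain ⟨B, hB_def⟩ : ∃ x, μ / 2 * (ru / rl) ^ 3 * (vb ^ 2 / CP2l) * (su / sl) ^ 3 = x := ⟨_, rfl⟩
  rw [hA_def, hB_def]
  have hyoung : X * D * E ≤ A * D ^ 2 + B * E ^ 2 := by
    have h5 : 4 * A * (X * D * E) ≤ 4 * A * (A * D ^ 2) + X ^ 2 * E ^ 2 := by
      nlinarith [sq_nonneg (2 * A * D - X * E)]
    have hXB : X ^ 2 = 4 * A * B := by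
      rw [← hX_def, ← hA_def, ← hB_def]; field_simp; ring
    have h6 : 4 * A * (X * D * E) ≤ 4 * A * (A * D ^ 2 + B * E ^ 2) := by
      rw [hXB] at h5; linarith
    exact le_of_mul_le_mul_left h6 (by positivity)
  have hmain : -(K0 * T * ((w ^ 2 - wh ^ 2) / 2)) ≤ A * D ^ 2 + B * E ^ 2 := hcross.trans hyoung
  have hAeq : μ * (rl / ru) * CP2l * (sl / su) = 2 * A := by rw [← hA_def]; ring
  calc -(K0 * T * ((w ^ 2 - wh ^ 2) / 2 + S))
      = -(K0 * (T * S)) + -(K0 * T * ((w ^ 2 - wh ^ 2) / 2)) := by ring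
    _ ≤ -(2 * A * (a - ah) ^ 2) + (A * D ^ 2 + B * E ^ 2) := by
        rw [hAeq] at step1; linarith
    _ = -A * (a - ah) ^ 2 + B * (w - wh) ^ 2 := by rw [hD2, hE2]; ring

lemma obs_TS {rl ru m M : ℝ} {F G : ℝ → ℝ} (hm : 0 ≤ m)
    (hFd : ∀ x ∈ Icc rl ru, ∀ y ∈ Icc rl ru, x ≤ y → F y - F x = ∫ s in x..y, G s)
    (hGc : ContinuousOn G (Icc rl ru)) (hGb : ∀ s ∈ Icc rl ru, m ≤ G s ∧ G s ≤ M)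
    {a ah : ℝ} (ha : a ∈ Icc rl ru) (hah : ah ∈ Icc rl ru) :
    (0 ≤ a - ah → m * (a - ah) ≤ F a - F ah) ∧ (a - ah ≤ 0 → F a - F ah ≤ m * (a - ah)) ∧
      |F a - F ah| ≤ M * |a - ah| := by
  refine ⟨?_, ?_, ?_⟩
  · intro h
    have hba : ah ≤ a := by linarith
    have h1 := (obs_sandwich hGc hGb hah ha hba).1
    rw [← hFd ah hah a ha hba] at h1; linarith
  · intro h
    have hab : a ≤ ah := by linarith
    have h1 := (obs_sandwich hGc hGb ha hah hab).1
    rw [← hFd a ha ah hah hab] at h1; linarith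
  · rcases le_total ah a with h | h
    · obtain ⟨l1, l2⟩ := obs_sandwich hGc hGb hah ha h
      rw [← hFd ah hah a ha h] at l1 l2
      have h0 : 0 ≤ F a - F ah := le_trans (mul_nonneg hm (by linarith)) l1
      rw [abs_of_nonneg h0, abs_of_nonneg (by linarith : (0:ℝ) ≤ a - ah)]; linarith
    · obtain ⟨l1, l2⟩ := obs_sandwich hGc hGb ha hah h
      rw [← hFd a ha ah hah h] at l1 l2
      have h0 : F a - F ah ≤ 0 := by
        have := mul_nonneg hm (by linarith : (0:ℝ) ≤ ah - a); linarith
      rw [abs_of_nonpos h0, abs_of_nonpos (by linarith : a - ah ≤ 0)]; linarith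

/-- Observer-term estimate for density measurements: with `p'(ρ) = ρP''(ρ)`,
`c = √(p'(ρ_ref))`, `P̃(ρ) = ∫_{ρ_ref}^ρ √(p'(s))/(cs) ds`, and the Luenberger term
`L_ρ = μ(c/√(p'(ρ̂)))ρ̂(P̃(ρ) − P̃(ρ̂))`, the quantity `−⟨L_ρ, h − ĥ⟩` is bounded by
`−½μ(ρ̲/ρ̄)C̲_{P''}√(C̲_{p'}/C̄_{p'}) ∫ (ρ − ρ̂)²
 + ½μ(ρ̄/ρ̲)³(v̄²/C̲_{P''})(C̄_{p'}/C̲_{p'})^{3/2} ∫ (v − v̂)²`. -/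
theorem stmt_16 (rl ru vb ℓ μ rref c CP2l CP2u CP3 Cpl Cpu : ℝ)
    (P P' P'' P''' : ℝ → ℝ) (Pt : ℝ → ℝ)
    (hrl : 0 < rl) (hlu : rl < ru) (hvb : 0 < vb) (hℓ : 0 < ℓ) (hμ : 0 < μ)
    (hP' : ∀ s ∈ Icc rl ru, HasDerivAt P (P' s) s)
    (hP'' : ∀ s ∈ Icc rl ru, HasDerivAt P' (P'' s) s)
    (hP''' : ∀ s ∈ Icc rl ru, HasDerivAt P'' (P''' s) s)
    (hCP2l : 0 < CP2l)
    (hP2 : ∀ s ∈ Icc rl ru, CP2l ≤ P'' s ∧ P'' s ≤ CP2u)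
    (hP3 : ∀ s ∈ Icc rl ru, |P''' s| ≤ CP3)
    (hCpl : 0 < Cpl)
    (hp'bd : ∀ s ∈ Icc rl ru, Cpl ≤ s * P'' s ∧ s * P'' s ≤ Cpu)
    (hrref : rref ∈ Icc rl ru)
    (hc : c = Real.sqrt (rref * P'' rref))
    (hPt : ∀ r : ℝ, Pt r = ∫ s in rref..r, Real.sqrt (s * P'' s) / (c * s))
    (ρ ρh v vh : ℝ → ℝ)
    (hρm : Measurable ρ) (hρhm : Measurable ρh) (hvm : Measurable v) (hvhm : Measurable vh)
    (hbd : ∀ᵐ x ∂(volume.restrict (Ioo (0:ℝ) ℓ)),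
      ρ x ∈ Icc rl ru ∧ ρh x ∈ Icc rl ru ∧ |v x| ≤ vb ∧ |vh x| ≤ vb) :
    -(∫ x in Ioo (0:ℝ) ℓ,
        μ * (c / Real.sqrt (ρh x * P'' (ρh x))) * ρh x * (Pt (ρ x) - Pt (ρh x)) *
          ((v x ^ 2 - vh x ^ 2) / 2 + P' (ρ x) - P' (ρh x))) ≤
      -(μ / 2 * (rl / ru) * CP2l * Real.sqrt (Cpl / Cpu)) *
          (∫ x in Ioo (0:ℝ) ℓ, (ρ x - ρh x) ^ 2) +
        μ / 2 * (ru / rl) ^ 3 * (vb ^ 2 / CP2l) * Real.sqrt (Cpu / Cpl) ^ 3 *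
          (∫ x in Ioo (0:ℝ) ℓ, (v x - vh x) ^ 2) := by
  have hru : 0 < ru := hrl.trans hlu
  have hplu : Cpl ≤ Cpu := le_trans (hp'bd rref hrref).1 (hp'bd rref hrref).2
  have hCP2u : CP2l ≤ CP2u := le_trans (hP2 rref hrref).1 (hP2 rref hrref).2
  have hc0 : 0 < c := hc ▸ Real.sqrt_pos.2 (lt_of_lt_of_le hCpl (hp'bd rref hrref).1)
  have hP''c : ContinuousOn P'' (Icc rl ru) :=
    fun s hs => ((hP''' s hs).continuousAt).continuousWithinAt
  have hP'c : ContinuousOn P' (Icc rl ru) :=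
    fun s hs => ((hP'' s hs).continuousAt).continuousWithinAt
  set G : ℝ → ℝ := fun s => Real.sqrt (s * P'' s) / (c * s) with hG_def
  have hGc : ContinuousOn G (Icc rl ru) := by
    apply ContinuousOn.div
    · exact (continuous_id.continuousOn.mul hP''c).sqrt
    · exact (continuous_const.mul continuous_id).continuousOn
    · intro s hs
      have hs0 : 0 < s := lt_of_lt_of_le hrl hs.1
      exact (mul_pos hc0 hs0).ne'
  have hGb : ∀ s ∈ Icc rl ru,
      Real.sqrt Cpl / (c * ru) ≤ G s ∧ G s ≤ Real.sqrt Cpu / (c * rl) := by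
    intro s hs
    have hs0 : 0 < s := lt_of_lt_of_le hrl hs.1
    obtain ⟨h1, h2⟩ := hp'bd s hs
    constructor
    · exact div_le_div₀ (Real.sqrt_nonneg _) (Real.sqrt_le_sqrt h1) (by positivity)
        (mul_le_mul_of_nonneg_left hs.2 hc0.le)
    · exact div_le_div₀ (Real.sqrt_nonneg _) (Real.sqrt_le_sqrt h2) (by positivity)
        (mul_le_mul_of_nonneg_left hs.1 hc0.le)
  have hIsub : ∀ {x y : ℝ}, x ∈ Icc rl ru → y ∈ Icc rl ru → uIcc x y ⊆ Icc rl ru := by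
    intro x y hx hy
    have h : uIcc x y ⊆ uIcc rl ru := uIcc_subset_uIcc
      (by rw [uIcc_of_le hlu.le]; exact hx) (by rw [uIcc_of_le hlu.le]; exact hy)
    rwa [uIcc_of_le hlu.le] at h
  have hGint : ∀ {x y : ℝ}, x ∈ Icc rl ru → y ∈ Icc rl ru →
      IntervalIntegrable G volume x y :=
    fun hx hy => (hGc.mono (hIsub hx hy)).intervalIntegrable
  have hPtd : ∀ x ∈ Icc rl ru, ∀ y ∈ Icc rl ru, x ≤ y → Pt y - Pt x = ∫ s in x..y, G s := by
    intro x hx y hy _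
    rw [hPt, hPt]
    exact intervalIntegral.integral_interval_sub_left (hGint hrref hy) (hGint hrref hx)
  have hP''int : ∀ {x y : ℝ}, x ∈ Icc rl ru → y ∈ Icc rl ru →
      IntervalIntegrable P'' volume x y :=
    fun hx hy => (hP''c.mono (hIsub hx hy)).intervalIntegrable
  have hP'd : ∀ x ∈ Icc rl ru, ∀ y ∈ Icc rl ru, x ≤ y → P' y - P' x = ∫ s in x..y, P'' s := by
    intro x hx y hy hxy
    exact (intervalIntegral.integral_eq_sub_of_hasDerivAt
      (fun s hs => hP'' s (hIsub hx hy hs)) (hP''int hx hy)).symm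
  have hm1nn : (0:ℝ) ≤ Real.sqrt Cpl / (c * ru) :=
    div_nonneg (Real.sqrt_nonneg _) (by positivity)
  -- pointwise estimate
  have hae : ∀ᵐ x ∂(volume.restrict (Ioo (0:ℝ) ℓ)),
      -(μ * (c / Real.sqrt (ρh x * P'' (ρh x))) * ρh x * (Pt (ρ x) - Pt (ρh x)) *
          ((v x ^ 2 - vh x ^ 2) / 2 + P' (ρ x) - P' (ρh x))) ≤
        -(μ / 2 * (rl / ru) * CP2l * Real.sqrt (Cpl / Cpu)) * (ρ x - ρh x) ^ 2 +
          μ / 2 * (ru / rl) ^ 3 * (vb ^ 2 / CP2l) * Real.sqrt (Cpu / Cpl) ^ 3 *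
            (v x - vh x) ^ 2 := by
    filter_upwards [hbd] with x hx
    obtain ⟨hxa, hxah, hxw, hxwh⟩ := hx
    have hQl : Real.sqrt Cpl ≤ Real.sqrt (ρh x * P'' (ρh x)) :=
      Real.sqrt_le_sqrt (hp'bd _ hxah).1
    have hQu : Real.sqrt (ρh x * P'' (ρh x)) ≤ Real.sqrt Cpu :=
      Real.sqrt_le_sqrt (hp'bd _ hxah).2
    obtain ⟨t1, t2, t3⟩ := obs_TS hm1nn hPtd hGc hGb hxa hxah
    obtain ⟨s1, s2, s3⟩ := obs_TS hCP2l.le hP'd hP''c hP2 hxa hxah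
    have hTS : Real.sqrt Cpl / (c * ru) * CP2l * (ρ x - ρh x) ^ 2 ≤
        (Pt (ρ x) - Pt (ρh x)) * (P' (ρ x) - P' (ρh x)) :=
      obs_prod_lower hm1nn hCP2l.le t1 t2 s1 s2
    have hkey := obs_key μ c rl ru vb Cpl Cpu CP2l hμ hrl hlu hvb hCpl hplu hCP2l hc0
      (Real.sqrt (ρh x * P'' (ρh x))) (Pt (ρ x) - Pt (ρh x)) (P' (ρ x) - P' (ρh x))
      (ρ x) (ρh x) (v x) (vh x) hQl hQu hTS t3 hxa hxah hxw hxwh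
    have heq : μ * (c / Real.sqrt (ρh x * P'' (ρh x))) * ρh x * (Pt (ρ x) - Pt (ρh x)) *
        ((v x ^ 2 - vh x ^ 2) / 2 + P' (ρ x) - P' (ρh x)) =
        μ * (c / Real.sqrt (ρh x * P'' (ρh x))) * ρh x * (Pt (ρ x) - Pt (ρh x)) *
        ((v x ^ 2 - vh x ^ 2) / 2 + (P' (ρ x) - P' (ρh x))) := by ring
    rw [heq]
    exact hkey
  -- continuity of Pt on the interval
  have hPtc : ContinuousOn Pt (Icc rl ru) := by
    have hl : LipschitzOnWith (Real.toNNReal (Real.sqrt Cpu / (c * rl))) Pt (Icc rl ru) := by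
      rw [lipschitzOnWith_iff_dist_le_mul]
      intro x hx y hy
      rw [Real.dist_eq, Real.dist_eq]
      have h := (obs_TS hm1nn hPtd hGc hGb hx hy).2.2
      refine h.trans (mul_le_mul_of_nonneg_right ?_ (abs_nonneg _))
      rw [Real.coe_toNNReal']
      exact le_max_left _ _
    exact hl.continuousOn
  -- continuous extensions
  set P'e : ℝ → ℝ := IccExtend hlu.le ((Icc rl ru).restrict P') with hP'e_def
  set P''e : ℝ → ℝ := IccExtend hlu.le ((Icc rl ru).restrict P'') with hP''e_def
  set Pte : ℝ → ℝ := IccExtend hlu.le ((Icc rl ru).restrict Pt) with hPte_def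
  have hP'em : Continuous P'e := Continuous.Icc_extend' (continuousOn_iff_continuous_restrict.mp hP'c)
  have hP''em : Continuous P''e := Continuous.Icc_extend' (continuousOn_iff_continuous_restrict.mp hP''c)
  have hPtem : Continuous Pte := Continuous.Icc_extend' (continuousOn_iff_continuous_restrict.mp hPtc)
  set f : ℝ → ℝ := fun x =>
    μ * (c / Real.sqrt (ρh x * P'' (ρh x))) * ρh x * (Pt (ρ x) - Pt (ρh x)) *
      ((v x ^ 2 - vh x ^ 2) / 2 + P' (ρ x) - P' (ρh x)) with hf_def
  set fe : ℝ → ℝ := fun x =>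
    μ * (c / Real.sqrt (ρh x * P''e (ρh x))) * ρh x * (Pte (ρ x) - Pte (ρh x)) *
      ((v x ^ 2 - vh x ^ 2) / 2 + P'e (ρ x) - P'e (ρh x)) with hfe_def
  have hfem : Measurable fe := by
    apply Measurable.mul
    apply Measurable.mul
    apply Measurable.mul
    · exact measurable_const.mul
        (measurable_const.div (Real.continuous_sqrt.measurable.comp (hρhm.mul (hP''em.measurable.comp hρhm))))
    · exact hρhm
    · exact (hPtem.measurable.comp hρm).sub (hPtem.measurable.comp hρhm)
    · exact ((((hvm.pow_const 2).sub (hvhm.pow_const 2)).div_const 2).add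
        (hP'em.measurable.comp hρm)).sub (hP'em.measurable.comp hρhm)
  have hfeq : f =ᵐ[volume.restrict (Ioo (0:ℝ) ℓ)] fe := by
    filter_upwards [hbd] with x hx
    obtain ⟨hxa, hxah, -, -⟩ := hx
    have e1 : P''e (ρh x) = P'' (ρh x) := IccExtend_of_mem hlu.le _ hxah
    have e2 : Pte (ρ x) = Pt (ρ x) := IccExtend_of_mem hlu.le _ hxa
    have e3 : Pte (ρh x) = Pt (ρh x) := IccExtend_of_mem hlu.le _ hxah
    have e4 : P'e (ρ x) = P' (ρ x) := IccExtend_of_mem hlu.le _ hxa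
    have e5 : P'e (ρh x) = P' (ρh x) := IccExtend_of_mem hlu.le _ hxah
    simp only [hf_def, hfe_def, e1, e2, e3, e4, e5]
  have hfaesm : AEStronglyMeasurable f (volume.restrict (Ioo (0:ℝ) ℓ)) :=
    hfem.aestronglyMeasurable.congr hfeq.symm
  have hfin : volume (Ioo (0:ℝ) ℓ) < ⊤ := by
    rw [Real.volume_Ioo]; exact ENNReal.ofReal_lt_top
  have hCP2u0 : 0 ≤ CP2u := hCP2l.le.trans hCP2u
  -- uniform bound on f
  have hbound : ∀ᵐ x ∂(volume.restrict (Ioo (0:ℝ) ℓ)),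
      ‖f x‖ ≤ μ * (c / Real.sqrt Cpl) * ru * (Real.sqrt Cpu / (c * rl) * (ru - rl)) *
        (vb ^ 2 + CP2u * (ru - rl)) := by
    filter_upwards [hbd] with x hx
    obtain ⟨hxa, hxah, hxw, hxwh⟩ := hx
    have hsl0 : 0 < Real.sqrt Cpl := Real.sqrt_pos.2 hCpl
    have hQl : Real.sqrt Cpl ≤ Real.sqrt (ρh x * P'' (ρh x)) :=
      Real.sqrt_le_sqrt (hp'bd _ hxah).1
    have hQ0 : 0 < Real.sqrt (ρh x * P'' (ρh x)) := hsl0.trans_le hQl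
    obtain ⟨-, -, t3⟩ := obs_TS hm1nn hPtd hGc hGb hxa hxah
    obtain ⟨-, -, s3⟩ := obs_TS hCP2l.le hP'd hP''c hP2 hxa hxah
    have habsd : |ρ x - ρh x| ≤ ru - rl := by
      rw [abs_le]; constructor
      · linarith [hxa.1, hxah.2]
      · linarith [hxa.2, hxah.1]
    have hK0nn : 0 ≤ μ * (c / Real.sqrt (ρh x * P'' (ρh x))) * ρh x :=
      mul_nonneg (mul_nonneg hμ.le (div_nonneg hc0.le hQ0.le)) (hrl.le.trans hxah.1)
    have b1 : μ * (c / Real.sqrt (ρh x * P'' (ρh x))) * ρh x ≤ μ * (c / Real.sqrt Cpl) * ru := by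
      apply mul_le_mul _ hxah.2 (hrl.le.trans hxah.1)
        (mul_nonneg hμ.le (div_nonneg hc0.le hsl0.le))
      exact mul_le_mul_of_nonneg_left (div_le_div_of_nonneg_left hc0.le hsl0 hQl) hμ.le
    have b2 : |Pt (ρ x) - Pt (ρh x)| ≤ Real.sqrt Cpu / (c * rl) * (ru - rl) :=
      t3.trans (mul_le_mul_of_nonneg_left habsd
        (div_nonneg (Real.sqrt_nonneg _) (by positivity)))
    have hw' := abs_le.1 hxw
    have hwh' := abs_le.1 hxwh
    have hw2 : v x ^ 2 ≤ vb ^ 2 := by nlinarith [hw'.1, hw'.2]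
    have hwh2 : vh x ^ 2 ≤ vb ^ 2 := by nlinarith [hwh'.1, hwh'.2]
    have hcb : |(v x ^ 2 - vh x ^ 2) / 2| ≤ vb ^ 2 := by
      rw [abs_le]; constructor
      · nlinarith [sq_nonneg (v x), sq_nonneg (vh x)]
      · nlinarith [sq_nonneg (v x), sq_nonneg (vh x)]
    have hSb : |P' (ρ x) - P' (ρh x)| ≤ CP2u * (ru - rl) :=
      s3.trans (mul_le_mul_of_nonneg_left habsd hCP2u0)
    have b3 : |(v x ^ 2 - vh x ^ 2) / 2 + P' (ρ x) - P' (ρh x)| ≤ vb ^ 2 + CP2u * (ru - rl) := by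
      have he : (v x ^ 2 - vh x ^ 2) / 2 + P' (ρ x) - P' (ρh x) =
          (v x ^ 2 - vh x ^ 2) / 2 + (P' (ρ x) - P' (ρh x)) := by ring
      rw [he]
      exact (abs_add_le _ _).trans (add_le_add hcb hSb)
    have hfx : ‖f x‖ = |μ * (c / Real.sqrt (ρh x * P'' (ρh x))) * ρh x| *
        |Pt (ρ x) - Pt (ρh x)| * |(v x ^ 2 - vh x ^ 2) / 2 + P' (ρ x) - P' (ρh x)| := by
      simp only [hf_def, Real.norm_eq_abs, abs_mul]
    rw [hfx, abs_of_nonneg hK0nn]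
    apply mul_le_mul _ b3 (abs_nonneg _)
    · apply mul_nonneg (mul_nonneg (mul_nonneg hμ.le (div_nonneg hc0.le hsl0.le)) hru.le)
      exact mul_nonneg (div_nonneg (Real.sqrt_nonneg _) (by positivity)) (by linarith)
    · exact mul_le_mul b1 b2 (abs_nonneg _)
        (mul_nonneg (mul_nonneg hμ.le (div_nonneg hc0.le hsl0.le)) hru.le)
  have hfi : Integrable f (volume.restrict (Ioo (0:ℝ) ℓ)) :=
    Integrable.mono' (integrableOn_const hfin.ne) hfaesm hbound
  -- integrability of the quadratic terms
  have hg1i : Integrable (fun x => (ρ x - ρh x) ^ 2) (volume.restrict (Ioo (0:ℝ) ℓ)) := by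
    apply Integrable.mono' (g := fun _ => (ru - rl) ^ 2) (integrableOn_const hfin.ne)
      ((hρm.sub hρhm).pow_const 2).aestronglyMeasurable
    filter_upwards [hbd] with x hx
    obtain ⟨hxa, hxah, -, -⟩ := hx
    rw [Real.norm_eq_abs, abs_of_nonneg (sq_nonneg _)]
    simp only [Pi.sub_apply]
    nlinarith [hxa.1, hxa.2, hxah.1, hxah.2]
  have hg2i : Integrable (fun x => (v x - vh x) ^ 2) (volume.restrict (Ioo (0:ℝ) ℓ)) := by
    apply Integrable.mono' (g := fun _ => (2 * vb) ^ 2) (integrableOn_const hfin.ne)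
      ((hvm.sub hvhm).pow_const 2).aestronglyMeasurable
    filter_upwards [hbd] with x hx
    obtain ⟨-, -, hxw, hxwh⟩ := hx
    have hw' := abs_le.1 hxw
    have hwh' := abs_le.1 hxwh
    rw [Real.norm_eq_abs, abs_of_nonneg (sq_nonneg _)]
    simp only [Pi.sub_apply]
    nlinarith [hw'.1, hw'.2, hwh'.1, hwh'.2]
  have hgi : Integrable (fun x =>
      -(μ / 2 * (rl / ru) * CP2l * Real.sqrt (Cpl / Cpu)) * (ρ x - ρh x) ^ 2 +
        μ / 2 * (ru / rl) ^ 3 * (vb ^ 2 / CP2l) * Real.sqrt (Cpu / Cpl) ^ 3 * (v x - vh x) ^ 2)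
      (volume.restrict (Ioo (0:ℝ) ℓ)) :=
    (hg1i.const_mul _).add (hg2i.const_mul _)
  calc -(∫ x in Ioo (0:ℝ) ℓ, f x) = ∫ x in Ioo (0:ℝ) ℓ, -(f x) := (integral_neg f).symm
    _ ≤ ∫ x in Ioo (0:ℝ) ℓ,
        (-(μ / 2 * (rl / ru) * CP2l * Real.sqrt (Cpl / Cpu)) * (ρ x - ρh x) ^ 2 +
          μ / 2 * (ru / rl) ^ 3 * (vb ^ 2 / CP2l) * Real.sqrt (Cpu / Cpl) ^ 3 * (v x - vh x) ^ 2) :=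
        integral_mono_ae hfi.neg hgi hae
    _ = -(μ / 2 * (rl / ru) * CP2l * Real.sqrt (Cpl / Cpu)) *
          (∫ x in Ioo (0:ℝ) ℓ, (ρ x - ρh x) ^ 2) +
        μ / 2 * (ru / rl) ^ 3 * (vb ^ 2 / CP2l) * Real.sqrt (Cpu / Cpl) ^ 3 *
          (∫ x in Ioo (0:ℝ) ℓ, (v x - vh x) ^ 2) := by
        rw [integral_add (hg1i.const_mul _) (hg2i.const_mul _), integral_const_mul,
          integral_const_mul]
end

section
/- Observer-term estimate for mass-flow measurements: Let μ > 0, 0 < ρ̲ ≤ ρ̄, v̄ > 0 and ℓ > 0. For all measurable ρ, ρ̂, v, v̂ on (0,ℓ) with ρ̲ ≤ ρ, ρ̂ ≤ ρ̄ and |v|, |v̂| ≤ v̄ a.e. (and ρ − ρ̂, v − v̂ ∈ L²(0,ℓ)), writing m = ρv and m̂ = ρ̂v̂: −μ ∫₀^ℓ (m − m̂)² dx ≤ −½ μ ρ̲² ∫₀^ℓ (v − v̂)² dx + 2 μ v̄² (ρ̄²/ρ̲²) ∫₀^ℓ (ρ − ρ̂)² dx. -/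
open MeasureTheory Set

set_option maxHeartbeats 1000000 in
/-- Observer-term estimate for mass-flow measurements: for measurable `ρ, ρ̂, v, v̂` on
`(0,ℓ)` with `ρ̲ ≤ ρ, ρ̂ ≤ ρ̄` and `|v|, |v̂| ≤ v̄` a.e., and `ρ − ρ̂, v − v̂ ∈ L²(0,ℓ)`,
writing `m = ρv`, `m̂ = ρ̂v̂`:
`−μ ∫ (m − m̂)² ≤ −½μρ̲² ∫ (v − v̂)² + 2μv̄²(ρ̄²/ρ̲²) ∫ (ρ − ρ̂)²`. -/
theorem stmt_17 (μ rl ru vb ℓ : ℝ) (hμ : 0 < μ) (hrl : 0 < rl) (hlu : rl ≤ ru)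
    (hvb : 0 < vb) (hℓ : 0 < ℓ)
    (ρ ρh v vh : ℝ → ℝ)
    (hρm : Measurable ρ) (hρhm : Measurable ρh) (hvm : Measurable v) (hvhm : Measurable vh)
    (hbd : ∀ᵐ x ∂(volume.restrict (Ioo (0:ℝ) ℓ)),
      ρ x ∈ Icc rl ru ∧ ρh x ∈ Icc rl ru ∧ |v x| ≤ vb ∧ |vh x| ≤ vb)
    (hL2r : IntegrableOn (fun x => (ρ x - ρh x) ^ 2) (Ioo (0:ℝ) ℓ))
    (hL2v : IntegrableOn (fun x => (v x - vh x) ^ 2) (Ioo (0:ℝ) ℓ)) :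
    -(μ * ∫ x in Ioo (0:ℝ) ℓ, (ρ x * v x - ρh x * vh x) ^ 2) ≤
      -(μ * rl ^ 2 / 2) * (∫ x in Ioo (0:ℝ) ℓ, (v x - vh x) ^ 2) +
        2 * μ * vb ^ 2 * (ru ^ 2 / rl ^ 2) * (∫ x in Ioo (0:ℝ) ℓ, (ρ x - ρh x) ^ 2) := by
  set S := Ioo (0:ℝ) ℓ
  -- integrability of (m - m̂)²
  have hmm : Measurable (fun x => (ρ x * v x - ρh x * vh x) ^ 2) := by measurability
  have hIm : IntegrableOn (fun x => (ρ x * v x - ρh x * vh x) ^ 2) S := by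
    refine Measure.integrableOn_of_bounded (M := (2 * ru * vb) ^ 2) ?_ hmm.aestronglyMeasurable ?_
    · simp [S, Real.volume_Ioo]
    · filter_upwards [hbd] with x ⟨h1, h2, h3, h4⟩
      have hrv : |ρ x * v x| ≤ ru * vb := by
        rw [abs_mul]
        exact mul_le_mul (by rw [abs_of_nonneg (hrl.le.trans h1.1)]; exact h1.2) h3
          (abs_nonneg _) (hrl.le.trans hlu)
      have hrv' : |ρh x * vh x| ≤ ru * vb := by
        rw [abs_mul]
        exact mul_le_mul (by rw [abs_of_nonneg (hrl.le.trans h2.1)]; exact h2.2) h4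
          (abs_nonneg _) (hrl.le.trans hlu)
      have : |ρ x * v x - ρh x * vh x| ≤ 2 * ru * vb := by
        calc |ρ x * v x - ρh x * vh x| ≤ |ρ x * v x| + |ρh x * vh x| := abs_sub _ _
        _ ≤ 2 * ru * vb := by linarith
      have h0 : (0:ℝ) ≤ 2 * ru * vb := le_trans (abs_nonneg _) this
      rw [Real.norm_eq_abs, abs_of_nonneg (sq_nonneg _)]
      nlinarith [sq_abs (ρ x * v x - ρh x * vh x), abs_nonneg (ρ x * v x - ρh x * vh x)]
  -- pointwise inequality integrated
  have key : ∫ x in S, (rl ^ 2 / 2) * (v x - vh x) ^ 2 ≤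
      ∫ x in S, ((ρ x * v x - ρh x * vh x) ^ 2 + 2 * vb ^ 2 * (ru ^ 2 / rl ^ 2) * (ρ x - ρh x) ^ 2) := by
    refine integral_mono_ae (hL2v.const_mul _) (hIm.add (hL2r.const_mul _)) ?_
    filter_upwards [hbd] with x ⟨h1, h2, h3, h4⟩
    have hvhb : vh x ^ 2 ≤ vb ^ 2 := by nlinarith [abs_nonneg (vh x), sq_abs (vh x)]
    have hdecomp : ρ x * (v x - vh x) = (ρ x * v x - ρh x * vh x) - (ρ x - ρh x) * vh x := by ring
    have hr2 : rl ^ 2 ≤ ρ x ^ 2 := by nlinarith [h1.1, hrl]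
    have h5 : rl ^ 2 * (v x - vh x) ^ 2 ≤ (ρ x * (v x - vh x)) ^ 2 := by
      have := mul_le_mul_of_nonneg_right hr2 (sq_nonneg (v x - vh x))
      nlinarith
    have h6 : (ρ x * (v x - vh x)) ^ 2 ≤
        2 * (ρ x * v x - ρh x * vh x) ^ 2 + 2 * ((ρ x - ρh x) * vh x) ^ 2 := by
      rw [hdecomp]; nlinarith [sq_nonneg ((ρ x * v x - ρh x * vh x) + (ρ x - ρh x) * vh x)]
    have h7 : ((ρ x - ρh x) * vh x) ^ 2 ≤ vb ^ 2 * (ρ x - ρh x) ^ 2 := by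
      nlinarith [sq_nonneg (ρ x - ρh x)]
    have h8 : (1:ℝ) ≤ ru ^ 2 / rl ^ 2 := by
      rw [le_div_iff₀ (by positivity)]; nlinarith
    set q := ru ^ 2 / rl ^ 2 with hq
    have h9 : vb ^ 2 * (ρ x - ρh x) ^ 2 ≤ 2 * vb ^ 2 * q * (ρ x - ρh x) ^ 2 := by
      nlinarith [mul_nonneg (sq_nonneg vb) (sq_nonneg (ρ x - ρh x))]
    nlinarith
  rw [integral_const_mul] at key
  rw [integral_add hIm (hL2r.const_mul _), integral_const_mul] at key
  have h := mul_le_mul_of_nonneg_left key hμ.le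
  nlinarith [h]
end

section
/- Pointwise enthalpy-difference estimate (estimate of the term (E₂) in the proof of Lemma 4.5): Let P be twice continuously differentiable on [ρ̲, ρ̄] (0 < ρ̲ < ρ̄) with P''(s) ≥ C̲_{P''} > 0 for all s ∈ [ρ̲, ρ̄], and let v̄ > 0. Then for all ρ, ρ̂ ∈ [ρ̲, ρ̄] and all v, v̂ ∈ ℝ with |v|, |v̂| ≤ v̄: (ρ̂ − ρ)(½(v² − v̂²) + P'(ρ) − P'(ρ̂)) ≤ −(C̲_{P''} − v̄²/(2ρ̲))(ρ − ρ̂)² + ½ ρ̲ (v − v̂)². -/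
open Set

/-- Strong monotonicity from a lower bound on the second derivative. -/
lemma mono_aux (rl ru CP2l : ℝ) (P' P'' : ℝ → ℝ)
    (hP'' : ∀ s ∈ Icc rl ru, HasDerivAt P' (P'' s) s)
    (hP''low : ∀ s ∈ Icc rl ru, CP2l ≤ P'' s) :
    ∀ a ∈ Icc rl ru, ∀ b ∈ Icc rl ru,
      CP2l * (b - a) ^ 2 ≤ (P' b - P' a) * (b - a) := by
  have key : ∀ a ∈ Icc rl ru, ∀ b ∈ Icc rl ru, a < b →
      CP2l * (b - a) ^ 2 ≤ (P' b - P' a) * (b - a) := by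
    intro a ha b hb hab
    have hsub : Icc a b ⊆ Icc rl ru := Icc_subset_Icc ha.1 hb.2
    have hcont : ContinuousOn P' (Icc a b) := fun x hx =>
      ((hP'' x (hsub hx)).continuousAt).continuousWithinAt
    obtain ⟨c, hc, hceq⟩ := exists_hasDerivAt_eq_slope P' P'' hab hcont
      (fun x hx => hP'' x (hsub (Ioo_subset_Icc_self hx)))
    have hcmem : c ∈ Icc rl ru := hsub (Ioo_subset_Icc_self hc)
    have hne : b - a ≠ 0 := sub_ne_zero.mpr hab.ne'
    rw [eq_div_iff hne] at hceq
    have h2 : CP2l ≤ P'' c := hP''low c hcmem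
    nlinarith [sq_nonneg (b - a), hab]
  intro a ha b hb
  rcases lt_trichotomy a b with h | h | h
  · exact key a ha b hb h
  · subst h; simp
  · have := key b hb a ha h
    nlinarith [this]

/-- Pointwise enthalpy-difference estimate (estimate of the term (E₂) in the
proof of Lemma 4.5): if `P` is twice continuously differentiable on `[ρ̲, ρ̄]`
with `P'' ≥ C̲_{P''} > 0` there, then for all `ρ, ρ̂ ∈ [ρ̲, ρ̄]` and all
`v, v̂` with `|v|, |v̂| ≤ v̄`,
`(ρ̂ − ρ)(½(v² − v̂²) + P'(ρ) − P'(ρ̂)) ≤ −(C̲_{P''} − v̄²/(2ρ̲))(ρ − ρ̂)² + ½ρ̲(v − v̂)²`. -/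
theorem stmt_18 (rl ru vb CP2l : ℝ) (P P' P'' : ℝ → ℝ)
    (hrl : 0 < rl) (hlu : rl < ru) (hvb : 0 < vb) (hC : 0 < CP2l)
    (hP' : ∀ s ∈ Icc rl ru, HasDerivAt P (P' s) s)
    (hP'' : ∀ s ∈ Icc rl ru, HasDerivAt P' (P'' s) s)
    (hP''cont : ContinuousOn P'' (Icc rl ru))
    (hP''low : ∀ s ∈ Icc rl ru, CP2l ≤ P'' s) :
    ∀ ρ ∈ Icc rl ru, ∀ ρh ∈ Icc rl ru, ∀ v vh : ℝ, |v| ≤ vb → |vh| ≤ vb →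
      (ρh - ρ) * ((v ^ 2 - vh ^ 2) / 2 + P' ρ - P' ρh) ≤
        -(CP2l - vb ^ 2 / (2 * rl)) * (ρ - ρh) ^ 2 + rl / 2 * (v - vh) ^ 2 := by
  intro ρ hρ ρh hρh v vh hv hvh
  have hmono := mono_aux rl ru CP2l P' P'' hP'' hP''low ρh hρh ρ hρ
  -- cross term estimate
  have habs : |(ρh - ρ) * (v + vh) * (v - vh)| ≤ |ρ - ρh| * (2 * vb) * |v - vh| := by
    rw [abs_mul, abs_mul]
    have h1 : |ρh - ρ| = |ρ - ρh| := abs_sub_comm _ _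
    have h2 : |v + vh| ≤ 2 * vb := by
      calc |v + vh| ≤ |v| + |vh| := abs_add_le _ _
        _ ≤ 2 * vb := by linarith
    rw [h1]
    gcongr
  have hle : (ρh - ρ) * (v + vh) * (v - vh) ≤ |ρ - ρh| * (2 * vb) * |v - vh| :=
    le_trans (le_abs_self _) habs
  have h1 : |ρ - ρh| ^ 2 = (ρ - ρh) ^ 2 := sq_abs _
  have h2 : |v - vh| ^ 2 = (v - vh) ^ 2 := sq_abs _
  have H : 2 * rl * ((ρh - ρ) * ((v ^ 2 - vh ^ 2) / 2)) ≤
      vb ^ 2 * (ρ - ρh) ^ 2 + rl ^ 2 * (v - vh) ^ 2 := by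
    nlinarith [sq_nonneg (vb * |ρ - ρh| - rl * |v - vh|), hle, h1, h2, hrl,
      mul_le_mul_of_nonneg_left hle (le_of_lt hrl)]
  have hcross : (ρh - ρ) * ((v ^ 2 - vh ^ 2) / 2) ≤
      vb ^ 2 / (2 * rl) * (ρ - ρh) ^ 2 + rl / 2 * (v - vh) ^ 2 := by
    have h2rl : (0 : ℝ) < 2 * rl := by positivity
    rw [← mul_le_mul_iff_right₀ h2rl]
    have hr : 2 * rl * (vb ^ 2 / (2 * rl) * (ρ - ρh) ^ 2 + rl / 2 * (v - vh) ^ 2)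
        = vb ^ 2 * (ρ - ρh) ^ 2 + rl ^ 2 * (v - vh) ^ 2 := by
      field_simp
    linarith [H, hr]
  nlinarith [hmono, hcross]
end

section
/- Mean-value form and coefficient bounds for the density observer term: Let P be three times continuously differentiable on [ρ̲, ρ̄] (0 < ρ̲ < ρ̄), set p'(ρ) := ρP''(ρ) and assume 0 < C̲_{p'} ≤ p'(ρ) ≤ C̄_{p'} on [ρ̲, ρ̄]; fix ρ_ref ∈ [ρ̲, ρ̄], c := √(p'(ρ_ref)) and P̃(ρ) := ∫_{ρ_ref}^ρ √(p'(s))/(c s) ds. Then for every μ > 0 and all ρ, ρ̂ ∈ [ρ̲, ρ̄] there exists ρ̃ ∈ [ρ̲, ρ̄] such that μ (c/√(p'(ρ̂))) ρ̂ (P̃(ρ) − P̃(ρ̂)) = μ (ρ̂/ρ̃) (√(p'(ρ̃))/√(p'(ρ̂))) (ρ − ρ̂), and the coefficient satisfies 0 < (ρ̲/ρ̄) √(C̲_{p'}/C̄_{p'}) ≤ (ρ̂/ρ̃) √(p'(ρ̃))/√(p'(ρ̂)) ≤ (ρ̄/ρ̲) √(C̄_{p'}/C̲_{p'}). -/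
open Set

/-- Mean-value form and coefficient bounds for the density observer term: with
`p'(ρ) = ρP''(ρ)`, `c = √(p'(ρ_ref))` and `P̃(ρ) = ∫_{ρ_ref}^ρ √(p'(s))/(cs) ds`,
for every `μ > 0` and all `ρ, ρ̂ ∈ [ρ̲, ρ̄]` there exists `ρ̃ ∈ [ρ̲, ρ̄]` with
`μ(c/√(p'(ρ̂)))ρ̂(P̃(ρ) − P̃(ρ̂)) = μ(ρ̂/ρ̃)(√(p'(ρ̃))/√(p'(ρ̂)))(ρ − ρ̂)` and
`0 < (ρ̲/ρ̄)√(C̲_{p'}/C̄_{p'}) ≤ (ρ̂/ρ̃)√(p'(ρ̃))/√(p'(ρ̂)) ≤ (ρ̄/ρ̲)√(C̄_{p'}/C̲_{p'})`. -/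
theorem stmt_19 (rl ru rref c Cpl Cpu : ℝ) (P P' P'' P''' : ℝ → ℝ) (Pt : ℝ → ℝ)
    (hrl : 0 < rl) (hlu : rl < ru)
    (hP' : ∀ s ∈ Icc rl ru, HasDerivAt P (P' s) s)
    (hP'' : ∀ s ∈ Icc rl ru, HasDerivAt P' (P'' s) s)
    (hP''' : ∀ s ∈ Icc rl ru, HasDerivAt P'' (P''' s) s)
    (hCpl : 0 < Cpl)
    (hp'bd : ∀ s ∈ Icc rl ru, Cpl ≤ s * P'' s ∧ s * P'' s ≤ Cpu)
    (hrref : rref ∈ Icc rl ru)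
    (hc : c = Real.sqrt (rref * P'' rref))
    (hPt : ∀ r : ℝ, Pt r = ∫ s in rref..r, Real.sqrt (s * P'' s) / (c * s)) :
    ∀ μ : ℝ, 0 < μ → ∀ ρ ∈ Icc rl ru, ∀ ρh ∈ Icc rl ru,
      ∃ rt ∈ Icc rl ru,
        μ * (c / Real.sqrt (ρh * P'' ρh)) * ρh * (Pt ρ - Pt ρh) =
          μ * (ρh / rt) * (Real.sqrt (rt * P'' rt) / Real.sqrt (ρh * P'' ρh)) * (ρ - ρh) ∧
        0 < rl / ru * Real.sqrt (Cpl / Cpu) ∧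
        rl / ru * Real.sqrt (Cpl / Cpu) ≤
          ρh / rt * (Real.sqrt (rt * P'' rt) / Real.sqrt (ρh * P'' ρh)) ∧
        ρh / rt * (Real.sqrt (rt * P'' rt) / Real.sqrt (ρh * P'' ρh)) ≤
          ru / rl * Real.sqrt (Cpu / Cpl) := by
  intro μ hμ ρ hρ ρh hρh
  have hru : (0:ℝ) < ru := hrl.trans hlu
  have hCpu : 0 < Cpu :=
    hCpl.trans_le ((hp'bd rl ⟨le_rfl, hlu.le⟩).1.trans (hp'bd rl ⟨le_rfl, hlu.le⟩).2)
  have hc0 : 0 < c := by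
    rw [hc]; exact Real.sqrt_pos.mpr (hCpl.trans_le (hp'bd rref hrref).1)
  set g : ℝ → ℝ := fun s => Real.sqrt (s * P'' s) / (c * s) with hg
  -- coefficient bounds, as a general claim
  have key : ∀ a ∈ Icc rl ru, ∀ b ∈ Icc rl ru,
      0 < rl / ru * Real.sqrt (Cpl / Cpu) ∧
      rl / ru * Real.sqrt (Cpl / Cpu) ≤
        a / b * (Real.sqrt (b * P'' b) / Real.sqrt (a * P'' a)) ∧
      a / b * (Real.sqrt (b * P'' b) / Real.sqrt (a * P'' a)) ≤
        ru / rl * Real.sqrt (Cpu / Cpl) := by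
    intro a ha b hb
    have ha0 : 0 < a := hrl.trans_le ha.1
    have hb0 : 0 < b := hrl.trans_le hb.1
    have hpa := hp'bd a ha
    have hpb := hp'bd b hb
    have hsa : 0 < Real.sqrt (a * P'' a) := Real.sqrt_pos.mpr (hCpl.trans_le hpa.1)
    have h1 : rl / ru ≤ a / b := div_le_div₀ ha0.le ha.1 hb0 hb.2
    have h1' : a / b ≤ ru / rl := div_le_div₀ hru.le ha.2 hrl hb.1
    have h2 : Real.sqrt Cpl / Real.sqrt Cpu ≤ Real.sqrt (b * P'' b) / Real.sqrt (a * P'' a) :=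
      div_le_div₀ (Real.sqrt_nonneg _) (Real.sqrt_le_sqrt hpb.1) hsa (Real.sqrt_le_sqrt hpa.2)
    have h2' : Real.sqrt (b * P'' b) / Real.sqrt (a * P'' a) ≤ Real.sqrt Cpu / Real.sqrt Cpl :=
      div_le_div₀ (Real.sqrt_nonneg _) (Real.sqrt_le_sqrt hpb.2)
        (Real.sqrt_pos.mpr hCpl) (Real.sqrt_le_sqrt hpa.1)
    rw [Real.sqrt_div hCpl.le, Real.sqrt_div hCpu.le]
    refine ⟨by positivity, ?_, ?_⟩
    · exact mul_le_mul h1 h2 (by positivity) (by positivity)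
    · exact mul_le_mul h1' h2' (by positivity) (by positivity)
  -- trivial case
  rcases eq_or_ne ρ ρh with rfl | hne
  · exact ⟨ρ, hρ, by ring, key ρ hρ ρ hρ⟩
  -- continuity of P'' and g on [rl, ru]
  have hcontP'' : ContinuousOn P'' (Icc rl ru) := fun s hs =>
    (hP''' s hs).continuousAt.continuousWithinAt
  have hgcont : ContinuousOn g (Icc rl ru) := by
    apply ContinuousOn.div
    · exact ((continuousOn_id.mul hcontP'').sqrt)
    · exact (continuousOn_const.mul continuousOn_id)
    · intro s hs
      have : 0 < s := hrl.trans_le hs.1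
      positivity
  -- Pt is continuous on [rl, ru]
  have hPtc : ContinuousOn Pt (Icc rl ru) := by
    have hint : IntervalIntegrable g MeasureTheory.volume rl ru :=
      (hgcont.mono (by rw [uIcc_of_le hlu.le])).intervalIntegrable
    have := intervalIntegral.continuousOn_primitive_interval' hint
      (by rw [uIcc_of_le hlu.le]; exact hrref)
    rw [uIcc_of_le hlu.le] at this
    exact this.congr fun x hx => (hPt x)
  -- Pt has derivative g r for r in the open interval
  have hPtderiv : ∀ r ∈ Ioo rl ru, HasDerivAt Pt (g r) r := by
    intro r hr
    have hrIcc : r ∈ Icc rl ru := Ioo_subset_Icc_self hr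
    have hint : IntervalIntegrable g MeasureTheory.volume rref r := by
      apply (hgcont.mono ?_).intervalIntegrable
      rw [← uIcc_of_le hlu.le]
      exact uIcc_subset_uIcc (by rw [uIcc_of_le hlu.le]; exact hrref)
        (by rw [uIcc_of_le hlu.le]; exact hrIcc)
    have hmeas : StronglyMeasurableAtFilter g (nhds r) MeasureTheory.volume :=
      (hgcont.mono Ioo_subset_Icc_self).stronglyMeasurableAtFilter isOpen_Ioo r hr
    have hca : ContinuousAt g r :=
      (hgcont r hrIcc).continuousAt (Icc_mem_nhds hr.1 hr.2)
    have hD := intervalIntegral.integral_hasDerivAt_right hint hmeas hca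
    have : Pt = fun x => ∫ s in rref..x, g s := funext hPt
    rw [this]
    exact hD
  -- MVT between min and max of ρ, ρh
  set a := min ρ ρh
  set b := max ρ ρh
  have hab : a < b := min_lt_max.mpr hne
  have haIcc : Icc a b ⊆ Icc rl ru :=
    Icc_subset_Icc (le_min hρ.1 hρh.1) (max_le hρ.2 hρh.2)
  obtain ⟨ξ, hξ, hslope⟩ := exists_hasDerivAt_eq_slope Pt g hab
    (hPtc.mono haIcc)
    (fun x hx => hPtderiv x ⟨(le_min hρ.1 hρh.1).trans_lt hx.1,
      hx.2.trans_le (max_le hρ.2 hρh.2)⟩)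
  have hξIcc : ξ ∈ Icc rl ru := haIcc (Ioo_subset_Icc_self hξ)
  have hξ0 : 0 < ξ := hrl.trans_le hξIcc.1
  -- Pt ρ - Pt ρh = g ξ * (ρ - ρh)
  have hmv : Pt ρ - Pt ρh = g ξ * (ρ - ρh) := by
    have hba : g ξ * (b - a) = Pt b - Pt a := by
      rw [hslope, div_mul_cancel₀ _ (sub_ne_zero.mpr hab.ne')]
    rcases le_total ρ ρh with h | h
    · have ha' : a = ρ := min_eq_left h
      have hb' : b = ρh := max_eq_right h
      rw [ha', hb'] at hba
      linarith [hba]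
    · have ha' : a = ρh := min_eq_right h
      have hb' : b = ρ := max_eq_left h
      rw [ha', hb'] at hba
      linarith [hba]
  refine ⟨ξ, hξIcc, ?_, key ρh hρh ξ hξIcc⟩
  rw [hmv]
  have hsh : 0 < Real.sqrt (ρh * P'' ρh) := Real.sqrt_pos.mpr (hCpl.trans_le (hp'bd ρh hρh).1)
  simp only [hg]
  field_simp
end
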